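/- arXiv:1611.03648 — 6 statements merged into one kernel-verified Lean document; each statement's English description precedes it below -/
import Mathlib

section
/- If F and G are matchings in a graph with |G| > |F|, then the union of their edge sets contains an F-augmenting alternating path, i.e., a path whose edges alternate between G\F and F, starting and ending at vertices not covered by F. -/
/-!
Induction on `|F|`. Counting covered vertices, some `v` is covered by `G` but not by `F`; let
`s(v, w) ∈ G`. If `w` is not covered by `F`, then `[v, w]` is augmenting. Otherwise let
`s(w, x) ∈ F`. Deleting `s(v, w)` from `G` and `s(w, x)` from `F` keeps `|F| < |G|`, so the
smaller pair has an augmenting path `q`, and `q` avoids `v` and `w`. Putting `s(w, x)` back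
covers only `w` and `x`: if `x` is an endpoint of `q`, orient `q` to start at `x` and prepend
`v, w`; otherwise `q` is already augmenting for `F`.
-/

variable {V : Type*}

/-- A matching: a set of non-loop edges that are pairwise vertex-disjoint. -/
def IsMatching (M : Set (Sym2 V)) : Prop :=
  (∀ e ∈ M, ¬ e.IsDiag) ∧ ∀ e ∈ M, ∀ f ∈ M, e ≠ f → ∀ v, v ∈ e → v ∉ f

/-- A vertex is covered by an edge set if it belongs to some edge. -/
def covered (M : Set (Sym2 V)) (v : V) : Prop := ∃ e ∈ M, v ∈ e

/-- A `K`–`F`-alternating path: a (simple) nonempty list of vertices whose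
odd-numbered edges (0-indexed: even positions) lie in `K` and even-numbered edges lie in `F`. -/
def AltPath (K F : Set (Sym2 V)) (p : List V) : Prop :=
  p ≠ [] ∧ p.Nodup ∧ ∀ i, ∀ h : i + 1 < p.length,
    s(p[i]'(Nat.lt_of_succ_lt h), p[i+1]'h) ∈ (if i % 2 = 0 then K else F)

lemma IsMatching.mono {M N : Set (Sym2 V)} (hM : IsMatching M) (h : N ⊆ M) : IsMatching N :=
  ⟨fun e he => hM.1 e (h he), fun e he f hf => hM.2 e (h he) f (h hf)⟩

lemma IsMatching.ne_of_mk_mem {M : Set (Sym2 V)} (hM : IsMatching M) {v w : V}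
    (h : s(v, w) ∈ M) : v ≠ w := fun hvw => hM.1 _ h (Sym2.mk_isDiag_iff.2 hvw)

lemma covered.mono {M N : Set (Sym2 V)} {v : V} (hv : covered M v) (h : M ⊆ N) :
    covered N v :=
  let ⟨e, he, hve⟩ := hv
  ⟨e, h he, hve⟩

lemma covered_union {M N : Set (Sym2 V)} {v : V} :
    covered (M ∪ N) v ↔ covered M v ∨ covered N v := by
  simp only [covered, Set.mem_union, or_and_right, exists_or]

section Finite

variable [DecidableEq V]

lemma IsMatching.not_covered_erase {M : Finset (Sym2 V)} (hM : IsMatching (M : Set (Sym2 V)))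
    {e : Sym2 V} (he : e ∈ M) {v : V} (hv : v ∈ e) : ¬ covered ↑(M.erase e) v := by
  rintro ⟨f, hf, hvf⟩
  rw [Finset.coe_erase, Set.mem_sdiff_singleton] at hf
  exact hM.2 e he f hf.1 (Ne.symm hf.2) v hv hvf

lemma not_covered_of_not_covered_erase {M : Finset (Sym2 V)} {e : Sym2 V} {v : V}
    (h : ¬ covered ↑(M.erase e) v) (hv : v ∉ e) : ¬ covered ↑M v := by
  rintro ⟨f, hf, hvf⟩
  have hfe : f ≠ e := by rintro rfl; exact hv hvf
  exact h ⟨f, Finset.mem_erase.2 ⟨hfe, hf⟩, hvf⟩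

lemma IsMatching.card_biUnion_toFinset {M : Finset (Sym2 V)}
    (hM : IsMatching (M : Set (Sym2 V))) : (M.biUnion Sym2.toFinset).card = 2 * M.card := by
  rw [Finset.card_biUnion, Finset.sum_congr rfl fun e he =>
    Sym2.card_toFinset_of_not_isDiag e (hM.1 e he), Finset.sum_const, smul_eq_mul, mul_comm]
  intro e he f hf hef
  rw [Function.onFun, Finset.disjoint_left]
  intro v hve hvf
  exact hM.2 e he f hf hef v (Sym2.mem_toFinset.1 hve) (Sym2.mem_toFinset.1 hvf)

lemma IsMatching.exists_covered_not_covered {F G : Finset (Sym2 V)}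
    (hF : IsMatching (F : Set (Sym2 V))) (hG : IsMatching (G : Set (Sym2 V)))
    (hlt : F.card < G.card) :
    ∃ v, covered (G : Set (Sym2 V)) v ∧ ¬ covered (F : Set (Sym2 V)) v := by
  by_contra! h
  have hsub : G.biUnion Sym2.toFinset ⊆ F.biUnion Sym2.toFinset := by
    intro v hv
    obtain ⟨e, he, hve⟩ := Finset.mem_biUnion.1 hv
    obtain ⟨f, hf, hvf⟩ := h v ⟨e, he, Sym2.mem_toFinset.1 hve⟩
    exact Finset.mem_biUnion.2 ⟨f, hf, Sym2.mem_toFinset.2 hvf⟩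
  have := Finset.card_le_card hsub
  rw [hF.card_biUnion_toFinset, hG.card_biUnion_toFinset] at this
  omega

end Finite

namespace AltPath

variable {K F K' F' : Set (Sym2 V)} {p : List V}

lemma mono (h : AltPath K F p) (hK : K ⊆ K') (hF : F ⊆ F') : AltPath K' F' p := by
  refine ⟨h.1, h.2.1, fun i hi => ?_⟩
  have := h.2.2 i hi
  split_ifs at this ⊢
  exacts [hK this, hF this]

lemma edge_mem_union (h : AltPath K F p) {i : ℕ} (hi : i + 1 < p.length) :
    s(p[i], p[i + 1]) ∈ K ∪ F := by
  have := h.2.2 i hi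
  split_ifs at this
  exacts [Or.inl this, Or.inr this]

lemma covered_of_mem (h : AltPath K F p) (hlen : 2 ≤ p.length) {u : V} (hu : u ∈ p) :
    covered (K ∪ F) u := by
  obtain ⟨i, hi, rfl⟩ := List.mem_iff_getElem.1 hu
  by_cases hi1 : i + 1 < p.length
  · exact ⟨_, h.edge_mem_union hi1, Sym2.mem_mk_left _ _⟩
  · obtain ⟨j, rfl⟩ : ∃ j, i = j + 1 := ⟨i - 1, by omega⟩
    exact ⟨_, h.edge_mem_union hi, Sym2.mem_mk_right _ _⟩

lemma reverse (h : AltPath K F p) (heven : Even p.length) : AltPath K F p.reverse := by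
  obtain ⟨hne, hnd, hedge⟩ := h
  refine ⟨by simpa using hne, List.nodup_reverse.2 hnd, fun i hi => ?_⟩
  rw [List.length_reverse] at hi
  obtain ⟨j, hj⟩ : ∃ j, p.length = i + j + 2 := ⟨p.length - i - 2, by omega⟩
  have hpar : j % 2 = i % 2 := by obtain ⟨k, hk⟩ := heven; omega
  have key := hedge j (by omega)
  rw [hpar] at key
  have e1 : p.reverse[i] = p[j + 1] := by rw [List.getElem_reverse]; congr 1; omega
  have e2 : p.reverse[i + 1] = p[j] := by rw [List.getElem_reverse]; congr 1; omega
  rw [e1, e2, Sym2.eq_swap]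
  exact key

lemma cons_cons {v w x : V} {r : List V} (h : AltPath K F (x :: r)) (hv : v ∉ x :: r)
    (hw : w ∉ x :: r) (hvw : v ≠ w) (hK : s(v, w) ∈ K) (hF : s(w, x) ∈ F) :
    AltPath K F (v :: w :: x :: r) := by
  refine ⟨List.cons_ne_nil _ _, List.nodup_cons.2 ⟨?_, List.nodup_cons.2 ⟨hw, h.2.1⟩⟩,
    fun i hi => ?_⟩
  · simpa [hvw] using hv
  rcases i with _ | _ | i
  · simpa using hK
  · simpa using hF
  · have := h.2.2 i (by simp at hi ⊢; omega)
    rwa [show (i + 2) % 2 = i % 2 by omega]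

end AltPath

def IsAugmentingPath (K F : Set (Sym2 V)) (p : List V) : Prop :=
  ∃ hp : p ≠ [], AltPath K F p ∧ Even p.length ∧
    ¬ covered F (p.head hp) ∧ ¬ covered F (p.getLast hp)

namespace IsAugmentingPath

variable {K F : Set (Sym2 V)} {p : List V}

lemma two_le_length (h : IsAugmentingPath K F p) : 2 ≤ p.length := by
  obtain ⟨hp, -, ⟨k, hk⟩, -⟩ := h
  have := List.length_pos_iff.2 hp
  omega

lemma not_mem (h : IsAugmentingPath K F p) {u : V} (hK : ¬ covered K u) (hF : ¬ covered F u) :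
    u ∉ p := fun hu =>
  (covered_union.1 (h.2.1.covered_of_mem h.two_le_length hu)).elim hK hF

lemma reverse (h : IsAugmentingPath K F p) : IsAugmentingPath K F p.reverse := by
  obtain ⟨hp, halt, heven, hhead, hlast⟩ := h
  exact ⟨by simpa using hp, halt.reverse heven, by simpa using heven,
    by rwa [List.head_reverse], by rwa [List.getLast_reverse]⟩

lemma pair {v w : V} (hvw : v ≠ w) (hK : s(v, w) ∈ K) (hv : ¬ covered F v)
    (hw : ¬ covered F w) : IsAugmentingPath K F [v, w] := by
  refine ⟨List.cons_ne_nil _ _, ⟨List.cons_ne_nil _ _, by simpa using hvw, fun i hi => ?_⟩,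
    even_two, hv, hw⟩
  obtain rfl : i = 0 := by simp at hi; omega
  simpa using hK

end IsAugmentingPath

section Augment

variable [DecidableEq V]

lemma IsMatching.erase_sdiff_erase_subset {F G : Finset (Sym2 V)}
    (hG : IsMatching (G : Set (Sym2 V))) {v w x : V} (hv : ¬ covered (F : Set (Sym2 V)) v)
    (hvw : s(v, w) ∈ G) (hwx : s(w, x) ∈ F) : G.erase s(v, w) \ F.erase s(w, x) ⊆ G \ F := by
  have hwxG : s(w, x) ∉ G := fun h =>
    hG.2 _ hvw _ h (fun he => hv ⟨_, hwx, he ▸ Sym2.mem_mk_left _ _⟩) w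
      (Sym2.mem_mk_right _ _) (Sym2.mem_mk_left _ _)
  intro e he
  simp only [Finset.mem_sdiff, Finset.mem_erase, not_and] at he ⊢
  exact ⟨he.1.2, he.2 (by rintro rfl; exact hwxG he.1.2)⟩

lemma IsAugmentingPath.cons_cons_of_erase {F G : Finset (Sym2 V)}
    (hG : IsMatching (G : Set (Sym2 V))) {v w x : V} {r : List V}
    (hv : ¬ covered (F : Set (Sym2 V)) v) (hvw : s(v, w) ∈ G) (hwx : s(w, x) ∈ F)
    (hq : IsAugmentingPath ↑(G.erase s(v, w) \ F.erase s(w, x)) ↑(F.erase s(w, x)) (x :: r))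
    (hvq : v ∉ x :: r) (hwq : w ∉ x :: r) :
    IsAugmentingPath ↑(G \ F) (F : Set (Sym2 V)) (v :: w :: x :: r) := by
  obtain ⟨hq0, halt, heven, -, hlast⟩ := hq
  have hr : r ≠ [] := by rintro rfl; simp at heven
  refine ⟨List.cons_ne_nil _ _, ?_, by simpa [Nat.even_add_one] using heven, hv, ?_⟩
  · refine (halt.mono (hG.erase_sdiff_erase_subset hv hvw hwx) (Finset.erase_subset _ _)).cons_cons
      hvq hwq (hG.ne_of_mk_mem hvw)
      (Finset.mem_sdiff.2 ⟨hvw, fun h => hv ⟨_, h, Sym2.mem_mk_left _ _⟩⟩) hwx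
  · rw [List.getLast_cons_cons, List.getLast_cons_cons]
    refine not_covered_of_not_covered_erase hlast (Sym2.mem_iff.not.2 (not_or.2 ⟨?_, ?_⟩))
    · exact fun h => hwq (h ▸ List.getLast_mem _)
    · rw [List.getLast_cons hr]
      exact fun h => (List.nodup_cons.1 halt.2.1).1 (h ▸ List.getLast_mem hr)

lemma IsMatching.exists_isAugmentingPath_of_erase {F G : Finset (Sym2 V)}
    (hF : IsMatching (F : Set (Sym2 V))) (hG : IsMatching (G : Set (Sym2 V))) {v w x : V}
    (hv : ¬ covered (F : Set (Sym2 V)) v) (hvw : s(v, w) ∈ G) (hwx : s(w, x) ∈ F) {q : List V}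
    (hq : IsAugmentingPath ↑(G.erase s(v, w) \ F.erase s(w, x)) ↑(F.erase s(w, x)) q) :
    ∃ p, IsAugmentingPath ↑(G \ F) (F : Set (Sym2 V)) p := by
  have hvq : v ∉ q := hq.not_mem
    (fun h => hG.not_covered_erase hvw (Sym2.mem_mk_left _ _)
      (h.mono (Finset.coe_subset.2 Finset.sdiff_subset)))
    (fun h => hv (h.mono (Finset.coe_subset.2 (Finset.erase_subset _ _))))
  have hwq : w ∉ q := hq.not_mem
    (fun h => hG.not_covered_erase hvw (Sym2.mem_mk_right _ _)
      (h.mono (Finset.coe_subset.2 Finset.sdiff_subset)))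
    (hF.not_covered_erase hwx (Sym2.mem_mk_left _ _))
  obtain ⟨hq0, halt, heven, hhead, hlast⟩ := id hq
  by_cases hxh : q.head hq0 = x
  · obtain ⟨r, rfl⟩ : ∃ r, q = x :: r := ⟨q.tail, by rw [← hxh, List.cons_head_tail]⟩
    exact ⟨_, hq.cons_cons_of_erase hG hv hvw hwx hvq hwq⟩
  by_cases hxl : q.getLast hq0 = x
  · have hrev : q.reverse ≠ [] := by simpa using hq0
    obtain ⟨r, hr⟩ : ∃ r, q.reverse = x :: r :=
      ⟨q.reverse.tail, by rw [← List.cons_head_tail hrev, List.head_reverse, hxl]; simp⟩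
    have hq' := hq.reverse
    rw [hr] at hq'
    exact ⟨_, hq'.cons_cons_of_erase hG hv hvw hwx (by simpa [← hr] using hvq)
      (by simpa [← hr] using hwq)⟩
  have hend : ∀ u ∈ q, u ≠ x → ¬ covered ↑(F.erase s(w, x)) u →
      ¬ covered (F : Set (Sym2 V)) u :=
    fun u hu hux h => not_covered_of_not_covered_erase h
      (Sym2.mem_iff.not.2 (not_or.2 ⟨fun huw => hwq (huw ▸ hu), hux⟩))
  exact ⟨q, hq0, halt.mono (hG.erase_sdiff_erase_subset hv hvw hwx) (Finset.erase_subset _ _),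
    heven, hend _ (List.head_mem hq0) hxh hhead, hend _ (List.getLast_mem hq0) hxl hlast⟩

theorem IsMatching.exists_isAugmentingPath {F G : Finset (Sym2 V)}
    (hF : IsMatching (F : Set (Sym2 V))) (hG : IsMatching (G : Set (Sym2 V)))
    (hlt : F.card < G.card) : ∃ p, IsAugmentingPath ↑(G \ F) (F : Set (Sym2 V)) p := by
  induction F using Finset.strongInduction generalizing G with
  | H F ih =>
  obtain ⟨v, ⟨e, heG, hve⟩, hvF⟩ := hF.exists_covered_not_covered hG hlt
  obtain ⟨w, rfl⟩ := Sym2.mem_iff_exists.1 hve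
  by_cases hw : covered (F : Set (Sym2 V)) w
  · obtain ⟨f, hfF, hwf⟩ := hw
    obtain ⟨x, rfl⟩ := Sym2.mem_iff_exists.1 hwf
    have hF0 : 0 < F.card := Finset.card_pos.2 ⟨_, hfF⟩
    obtain ⟨q, hq⟩ := ih _ (Finset.erase_ssubset hfF)
      (hF.mono (Finset.coe_subset.2 (Finset.erase_subset _ _)))
      (hG.mono (Finset.coe_subset.2 (Finset.erase_subset _ _)))
      (by rw [Finset.card_erase_of_mem hfF, Finset.card_erase_of_mem heG]; omega)
    exact hF.exists_isAugmentingPath_of_erase hG hvF heG hfF hq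
  · exact ⟨_, .pair (hG.ne_of_mk_mem heG)
      (Finset.mem_sdiff.2 ⟨heG, fun h => hvF ⟨_, h, Sym2.mem_mk_left _ _⟩⟩) hvF hw⟩

end Augment

/-- If `F` and `G` are matchings with `|G| > |F|`, then `F ∪ G` contains an
`F`-augmenting alternating path: its non-`F` edges lie in `G \ F`, it has an odd number of
edges (even number of vertices), and both endpoints are uncovered by `F`. -/
theorem stmt_0 {V : Type*} [DecidableEq V] (F G : Finset (Sym2 V))
    (hF : IsMatching (F : Set (Sym2 V))) (hG : IsMatching (G : Set (Sym2 V)))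
    (hlt : F.card < G.card) :
    ∃ (p : List V) (hp : p ≠ []),
      AltPath (↑(G \ F)) (↑F : Set (Sym2 V)) p ∧ Even p.length ∧
      ¬ covered (↑F) (p.head hp) ∧ ¬ covered (↑F) (p.getLast hp) :=
  IsMatching.exists_isAugmentingPath hF hG hlt
end

section
/- Let P be a path whose edges alternate between a matching M and a matching F, starting and ending with M-edges, so that P is F-augmenting. Then the symmetric difference of E(P) and F is a matching of size |F| + 1. -/
variable {V : Type*}

/-- The edges of a path given as a list of vertices. -/
def pathEdges [DecidableEq V] (p : List V) : Finset (Sym2 V) :=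
  ((p.zip p.tail).map fun q => s(q.1, q.2)).toFinset

lemma mem_pathEdges [DecidableEq V] (p : List V) (e : Sym2 V) :
    e ∈ pathEdges p ↔ ∃ i, ∃ h : i + 1 < p.length, e = s(p[i]'(Nat.lt_of_succ_lt h), p[i+1]'h) := by
  have hlen : (p.zip p.tail).length = p.length - 1 := by
    simp [List.length_zip]
  constructor
  · intro he
    simp only [pathEdges, List.mem_toFinset, List.mem_map] at he
    obtain ⟨q, hq, rfl⟩ := he
    obtain ⟨i, hi, rfl⟩ := List.mem_iff_getElem.mp hq
    have hi' : i + 1 < p.length := by omega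
    refine ⟨i, hi', ?_⟩
    simp [List.getElem_zip, List.getElem_tail]
  · rintro ⟨i, h, rfl⟩
    simp only [pathEdges, List.mem_toFinset, List.mem_map]
    have hi : i < (p.zip p.tail).length := by omega
    exact ⟨(p.zip p.tail)[i], List.getElem_mem hi, by simp [List.getElem_zip, List.getElem_tail]⟩

/-- if `p` is an `F`-augmenting alternating path (non-`F` edges in `K`,
`K` disjoint from `F`, even number of vertices, endpoints `F`-uncovered), then
`E(p) ∆ F` is a matching of size `|F| + 1`. -/
theorem stmt_1 {V : Type*} [DecidableEq V] (K F : Finset (Sym2 V))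
    (hKF : Disjoint K F) (hF : IsMatching (F : Set (Sym2 V)))
    (p : List V) (hp : p ≠ []) (halt : AltPath (↑K) (↑F : Set (Sym2 V)) p)
    (hev : Even p.length)
    (h1 : ¬ covered (↑F) (p.head hp)) (h2 : ¬ covered (↑F) (p.getLast hp)) :
    IsMatching ((symmDiff (pathEdges p) F) : Set (Sym2 V)) ∧
      (symmDiff (pathEdges p) F).card = F.card + 1 := by
  classical
  obtain ⟨-, hnd, halte⟩ := halt
  set n := p.length with hn
  obtain ⟨m, hm⟩ := hev
  have hn2 : 2 ≤ n := by
    have h0 : n ≠ 0 := by simp [hn, hp]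
    omega
  set v0 := p.head hp with hv0
  set ed : ℕ → Sym2 V := fun i => s(p.getD i v0, p.getD (i+1) v0) with hed
  have hedeq : ∀ i (h : i + 1 < n), ed i = s(p[i]'(by omega), p[i+1]'h) := by
    intro i h
    have a1 := List.getD_eq_getElem p v0 (show i < p.length by omega)
    have a2 := List.getD_eq_getElem p v0 (show i + 1 < p.length from h)
    simp only [hed]
    rw [a1, a2]
  -- nodup injectivity
  have hndi : ∀ i j (hi : i < n) (hj : j < n), p[i]'hi = p[j]'hj → i = j := by
    intro i j hi hj hij
    exact (hnd.getElem_inj_iff).mp hij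
  -- membership
  have hmem : ∀ e, e ∈ pathEdges p ↔ ∃ i, i + 1 < n ∧ e = ed i := by
    intro e
    rw [mem_pathEdges]
    constructor
    · rintro ⟨i, h, rfl⟩; exact ⟨i, h, (hedeq i h).symm⟩
    · rintro ⟨i, h, rfl⟩; exact ⟨i, h, (hedeq i h)⟩
  -- injectivity of ed
  have hinj : ∀ i j, i + 1 < n → j + 1 < n → ed i = ed j → i = j := by
    intro i j hi hj hij
    rw [hedeq i hi, hedeq j hj, Sym2.eq_iff] at hij
    rcases hij with ⟨h1', h2'⟩ | ⟨h1', h2'⟩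
    · exact hndi _ _ _ _ h1'
    · have := hndi _ _ (by omega) (by omega) h1'
      have := hndi _ _ (by omega) (by omega) h2'
      omega
  -- alternation
  have hKe : ∀ i, i + 1 < n → i % 2 = 0 → ed i ∈ K := by
    intro i h hi
    have := halte i h
    rw [hi] at this
    simpa [hedeq i h] using this
  have hFe : ∀ i, i + 1 < n → i % 2 = 1 → ed i ∈ F := by
    intro i h hi
    have := halte i h
    rw [hi] at this
    simpa [hedeq i h] using this
  have hKnF : ∀ i, i + 1 < n → i % 2 = 0 → ed i ∉ F := by
    intro i h hi hmemF
    exact Finset.disjoint_left.mp hKF (hKe i h hi) hmemF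
  -- endpoints uncovered
  have hv00 : v0 = p[0]'(by omega) := List.head_eq_getElem hp
  have h1' : ∀ f ∈ F, (p[0]'(by omega)) ∉ f := by
    intro f hf hvf
    exact h1 ⟨f, by exact_mod_cast hf, by rw [hv00]; exact hvf⟩
  have h2' : ∀ f ∈ F, (p[n-1]'(by omega)) ∉ f := by
    intro f hf hvf
    exact h2 ⟨f, by exact_mod_cast hf, by rwa [List.getLast_eq_getElem]⟩
  -- separation: K-edge of path shares no vertex with F-edge off path
  have hsep : ∀ f ∈ F, f ∉ pathEdges p → ∀ i, i + 1 < n → i % 2 = 0 →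
      ∀ v, v ∈ ed i → v ∉ f := by
    intro f hf hfP i h hi v hv hvf
    rw [hedeq i h, Sym2.mem_iff] at hv
    rcases hv with rfl | rfl
    · rcases Nat.eq_zero_or_pos i with rfl | hipos
      · exact h1' f hf hvf
      · have hprev : (i - 1) + 1 < n := by omega
        have hFprev : ed (i-1) ∈ F := hFe (i-1) hprev (by omega)
        have hne : ed (i-1) ≠ f := by
          intro hEq; exact hfP (hEq ▸ (hmem _).mpr ⟨i-1, hprev, rfl⟩)
        have hvmem : p[i]'(by omega) ∈ ed (i-1) := by
          rw [hedeq (i-1) hprev, Sym2.mem_iff]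
          right
          congr 1
          omega
        exact hF.2 (ed (i-1)) (by exact_mod_cast hFprev) f (by exact_mod_cast hf)
          hne _ hvmem hvf
    · rcases Nat.lt_or_ge (i + 2) n with hlt | hge
      · have hnext : (i + 1) + 1 < n := hlt
        have hFnext : ed (i+1) ∈ F := hFe (i+1) hnext (by omega)
        have hne : ed (i+1) ≠ f := by
          intro hEq; exact hfP (hEq ▸ (hmem _).mpr ⟨i+1, hnext, rfl⟩)
        have hvmem : p[i+1]'h ∈ ed (i+1) := by
          rw [hedeq (i+1) hnext, Sym2.mem_iff]; left; rfl
        exact hF.2 (ed (i+1)) (by exact_mod_cast hFnext) f (by exact_mod_cast hf)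
          hne _ hvmem hvf
      · have : i + 1 = n - 1 := by omega
        have : p[i+1]'h = p[n-1]'(by omega) := by congr 1
        rw [this] at hvf
        exact h2' f hf hvf
  -- characterize symmDiff members
  have hcase : ∀ e ∈ symmDiff (pathEdges p) F,
      (∃ i, i + 1 < n ∧ i % 2 = 0 ∧ e = ed i) ∨ (e ∈ F ∧ e ∉ pathEdges p) := by
    intro e he
    rcases Finset.mem_symmDiff.mp he with ⟨heP, heF⟩ | h
    · obtain ⟨i, hi, rfl⟩ := (hmem e).mp heP
      rcases Nat.even_or_odd i with hpar | hpar
      · exact Or.inl ⟨i, hi, Nat.even_iff.mp hpar, rfl⟩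
      · exact absurd (hFe i hi (Nat.odd_iff.mp hpar)) heF
    · exact Or.inr h
  constructor
  · constructor
    · -- no diagonal
      intro e he
      rcases hcase e (by exact_mod_cast he) with ⟨i, hi, _, rfl⟩ | ⟨heF, -⟩
      · rw [hedeq i hi, Sym2.mk_isDiag_iff]
        intro hEq
        have := hndi _ _ (by omega) (by omega) hEq
        omega
      · exact hF.1 e (by exact_mod_cast heF)
    · intro e he f hf hne v hve hvf
      rcases hcase e (by exact_mod_cast he) with ⟨i, hi, hip, rfl⟩ | ⟨heF, heP⟩ <;>
        rcases hcase f (by exact_mod_cast hf) with ⟨j, hj, hjp, rfl⟩ | ⟨hfF, hfP⟩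
      · -- both K-edges
        have hij : i ≠ j := fun h => hne (h ▸ rfl)
        rw [hedeq i hi, Sym2.mem_iff] at hve
        rw [hedeq j hj, Sym2.mem_iff] at hvf
        rcases hve with rfl | rfl <;> rcases hvf with h' | h' <;>
          · have := hndi _ _ (by omega) (by omega) h'
            omega
      · exact hsep _ hfF hfP i hi hip v hve hvf
      · exact hsep _ heF heP j hj hjp v hvf hve
      · exact hF.2 e (by exact_mod_cast heF) f (by exact_mod_cast hfF) hne v hve hvf
  · -- cardinality
    have hPdF : pathEdges p \ F = (Finset.range (n/2)).image (fun j => ed (2*j)) := by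
      ext e
      simp only [Finset.mem_sdiff, Finset.mem_image, Finset.mem_range]
      constructor
      · rintro ⟨heP, heF⟩
        obtain ⟨i, hi, rfl⟩ := (hmem e).mp heP
        rcases Nat.even_or_odd i with ⟨j, hj⟩ | hpar
        · exact ⟨j, by omega, by congr 1; omega⟩
        · exact absurd (hFe i hi (Nat.odd_iff.mp hpar)) heF
      · rintro ⟨j, hj, rfl⟩
        have h2j : 2*j + 1 < n := by omega
        exact ⟨(hmem _).mpr ⟨2*j, h2j, rfl⟩, hKnF _ h2j (by omega)⟩
    have hFiP : F ∩ pathEdges p = (Finset.range (n/2 - 1)).image (fun j => ed (2*j+1)) := by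
      ext e
      simp only [Finset.mem_inter, Finset.mem_image, Finset.mem_range]
      constructor
      · rintro ⟨heF, heP⟩
        obtain ⟨i, hi, rfl⟩ := (hmem e).mp heP
        rcases Nat.even_or_odd i with hpar | ⟨j, hj⟩
        · exact absurd heF (hKnF i hi (Nat.even_iff.mp hpar))
        · exact ⟨j, by omega, by congr 1; omega⟩
      · rintro ⟨j, hj, rfl⟩
        have h2j : (2*j+1) + 1 < n := by omega
        exact ⟨hFe _ h2j (by omega), (hmem _).mpr ⟨2*j+1, h2j, rfl⟩⟩
    have hc1 : (pathEdges p \ F).card = n / 2 := by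
      rw [hPdF, Finset.card_image_of_injOn, Finset.card_range]
      intro a ha b hb hab
      simp only [Finset.coe_range, Set.mem_Iio] at ha hb
      have := hinj _ _ (by omega) (by omega) hab
      omega
    have hc2 : (F ∩ pathEdges p).card = n / 2 - 1 := by
      rw [hFiP, Finset.card_image_of_injOn, Finset.card_range]
      intro a ha b hb hab
      simp only [Finset.coe_range, Set.mem_Iio] at ha hb
      have := hinj _ _ (by omega) (by omega) hab
      omega
    have hsd : (symmDiff (pathEdges p) F).card
        = (pathEdges p \ F).card + (F \ pathEdges p).card := by
      rw [symmDiff_def]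
      exact Finset.card_union_of_disjoint disjoint_sdiff_sdiff
    have hFsplit := Finset.card_sdiff_add_card_inter F (pathEdges p)
    rw [hsd, hc1]
    rw [hc2] at hFsplit
    omega
end

section
/- Any family of 2n−1 matchings, each of size n, in a bipartite graph possesses a rainbow matching of size n (one edge chosen from each of n distinct matchings of the family, forming a matching). -/
variable {V : Type*}

/-- A rainbow matching of size `n` for a family `M` of edge sets: `n` edges, one from each of
`n` distinct members, forming a matching. -/
def HasRainbow {V : Type*} [DecidableEq V] {m : ℕ} (n : ℕ) (M : Fin m → Finset (Sym2 V)) : Prop :=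
  ∃ (f : Fin n → Fin m) (e : Fin n → Sym2 V),
    Function.Injective f ∧ (∀ j, e j ∈ M (f j)) ∧ Function.Injective e ∧
    IsMatching ((Finset.image e Finset.univ : Finset (Sym2 V)) : Set (Sym2 V))

/-! Orient every edge from the `true` side to the `false` side and build the rainbow matching one
edge at a time. Suppose a rainbow matching `T` with `k` edges cannot be enlarged although `k + 1`
unused colours carry matchings with `k + 1` edges. Taking these colours one by one, a counting
argument gives an edge `(a, b)` of the new colour whose right end `b` is already free or freeable,
and whose left end `a` is not matched by `T` into the freed ends. Freeing `b` and adding `(a, b)`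
either enlarges `T`, which is excluded, or displaces the edge of `T` at `a` and frees one more
right end of `T`. After `k + 1` colours, `k + 1` distinct right ends of `T` are freeable, but `T`
has only `k`. -/

open Finset Function

namespace Drisko

variable {ι α β : Type*}

def IsBipartiteMatching (Q : Finset (α × β)) : Prop :=
  Set.InjOn Prod.fst (Q : Set (α × β)) ∧ Set.InjOn Prod.snd (Q : Set (α × β))

/-- A triple `(i, a, b)` of `T` is the edge `(a, b)` taken from the matching `P i`. -/
structure IsRainbowMatching (P : ι → Finset (α × β)) (T : Finset (ι × α × β)) : Prop where
  mem : ∀ x ∈ T, x.2 ∈ P x.1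
  injOn_color : Set.InjOn (fun x : ι × α × β => x.1) T
  injOn_left : Set.InjOn (fun x : ι × α × β => x.2.1) T
  injOn_right : Set.InjOn (fun x : ι × α × β => x.2.2) T

def colors [DecidableEq ι] (T : Finset (ι × α × β)) : Finset ι := T.image fun x => x.1

def lefts [DecidableEq α] (T : Finset (ι × α × β)) : Finset α := T.image fun x => x.2.1

def rights [DecidableEq β] (T : Finset (ι × α × β)) : Finset β := T.image fun x => x.2.2

variable {P : ι → Finset (α × β)} {T T' : Finset (ι × α × β)}

theorem isRainbowMatching_empty : IsRainbowMatching P ∅ :=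
  ⟨by simp, by simp, by simp, by simp⟩

namespace IsRainbowMatching

theorem mono (hT : IsRainbowMatching P T) (h : T' ⊆ T) : IsRainbowMatching P T' :=
  ⟨fun x hx => hT.mem x (h hx), hT.injOn_color.mono h, hT.injOn_left.mono h,
    hT.injOn_right.mono h⟩

theorem card_colors [DecidableEq ι] (hT : IsRainbowMatching P T) : (colors T).card = T.card :=
  card_image_of_injOn hT.injOn_color

theorem card_rights [DecidableEq β] (hT : IsRainbowMatching P T) : (rights T).card = T.card :=
  card_image_of_injOn hT.injOn_right

theorem insert [DecidableEq ι] [DecidableEq α] [DecidableEq β] (hT : IsRainbowMatching P T)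
    {i : ι} {p : α × β} (hp : p ∈ P i) (hi : i ∉ colors T) (ha : p.1 ∉ lefts T)
    (hb : p.2 ∉ rights T) : IsRainbowMatching P (insert (i, p) T) := by
  have hiT : (i, p) ∉ (T : Set (ι × α × β)) := fun h => hi (mem_image_of_mem _ h)
  simp only [colors, lefts, rights, ← mem_coe, coe_image] at hi ha hb
  refine ⟨?_, ?_, ?_, ?_⟩
  · intro x hx
    rcases mem_insert.1 hx with rfl | hx
    exacts [hp, hT.mem x hx]
  all_goals rw [coe_insert, Set.injOn_insert hiT]
  exacts [⟨hT.injOn_color, hi⟩, ⟨hT.injOn_left, ha⟩, ⟨hT.injOn_right, hb⟩]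

end IsRainbowMatching

theorem notMem_image_erase {γ δ : Type*} [DecidableEq γ] [DecidableEq δ] {f : γ → δ}
    {s : Finset γ} {x : γ} (hf : Set.InjOn f s) (hx : x ∈ s) : f x ∉ (s.erase x).image f := by
  simp only [mem_image, mem_erase, not_exists, not_and]
  exact fun y ⟨hyx, hy⟩ h => hyx (hf hy hx h)

/-- Counting: at most `|T| - |S|` edges of `Q` end in `rights T \ S`, and at most `|S|` start at a
left end of `T` whose partner lies in `S`. -/
theorem IsBipartiteMatching.exists_compatible_edge [DecidableEq α] [DecidableEq β]
    {Q : Finset (α × β)} (hQ : IsBipartiteMatching Q) (hT : IsRainbowMatching P T)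
    {S : Finset β} (hS : S ⊆ rights T) (hcard : T.card < Q.card) :
    ∃ p ∈ Q, (p.2 ∈ rights T → p.2 ∈ S) ∧ ∀ x ∈ T, x.2.1 = p.1 → x.2.2 ∉ S := by
  set TS := {x ∈ T | x.2.2 ∈ S}
  have hbad₁ : {p ∈ Q | p.2 ∈ rights T \ S}.card ≤ T.card - S.card := by
    rw [← hT.card_rights, ← card_sdiff_of_subset hS]
    exact card_le_card_of_injOn Prod.snd (fun p hp => (mem_filter.1 hp).2)
      (hQ.2.mono (filter_subset _ _))
  have hbad₂ : {p ∈ Q | p.1 ∈ lefts TS}.card ≤ S.card := calc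
    _ ≤ (lefts TS).card := card_le_card_of_injOn Prod.fst (fun p hp => (mem_filter.1 hp).2)
          (hQ.1.mono (filter_subset _ _))
    _ ≤ TS.card := card_image_le
    _ = (rights TS).card := ((hT.mono (filter_subset _ _)).card_rights).symm
    _ ≤ S.card := card_le_card fun b hb => by
          obtain ⟨x, hx, rfl⟩ := mem_image.1 hb
          exact (mem_filter.1 hx).2
  have hST : S.card ≤ T.card := hT.card_rights ▸ card_le_card hS
  obtain ⟨p, hpQ, hp⟩ := exists_mem_notMem_of_card_lt_card
    (s := {p ∈ Q | p.2 ∈ rights T \ S} ∪ {p ∈ Q | p.1 ∈ lefts TS}) (t := Q)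
    ((card_union_le _ _).trans_lt (by omega))
  simp only [mem_union, mem_filter, mem_sdiff, hpQ, true_and, not_or, not_and, not_not] at hp
  exact ⟨p, hpQ, hp.1,
    fun x hx hxp hxS => hp.2 (hxp ▸ mem_image_of_mem _ (mem_filter.2 ⟨hx, hxS⟩))⟩

variable [DecidableEq ι] [DecidableEq α] [DecidableEq β]

/-- The right end `b` can be released from `T` by re-matching with the extra colours `W`,
touching only the edges of `T` whose right end lies in `S`. -/
def CanFree (P : ι → Finset (α × β)) (T : Finset (ι × α × β)) (W : Finset ι) (S : Finset β)
    (b : β) : Prop :=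
  ∃ T', IsRainbowMatching P T' ∧ T'.card = T.card ∧ colors T' ⊆ colors T ∪ W ∧
    lefts T' ⊆ lefts T ∧ {x ∈ T | x.2.2 ∉ S} ⊆ T' ∧ b ∉ rights T'

theorem canFree_of_notMem_rights (hT : IsRainbowMatching P T) {W : Finset ι} {S : Finset β}
    {b : β} (hb : b ∉ rights T) : CanFree P T W S b :=
  ⟨T, hT, rfl, subset_union_left, subset_rfl, filter_subset _ _, hb⟩

namespace CanFree

variable {W W' : Finset ι} {S S' : Finset β} {u : ι} {p : α × β}

theorem mono (h : CanFree P T W S b) (hW : W ⊆ W') (hS : S ⊆ S') : CanFree P T W' S' b := by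
  obtain ⟨T', hT', hcard, hcol, hleft, hkeep, hb⟩ := h
  refine ⟨T', hT', hcard, hcol.trans (union_subset_union subset_rfl hW), hleft,
    fun x hx => hkeep ?_, hb⟩
  simp only [mem_filter] at hx ⊢
  exact ⟨hx.1, fun h => hx.2 (hS h)⟩

theorem augment (h : CanFree P T W S p.2) (hu : u ∉ colors T ∪ W) (hp : p ∈ P u)
    (ha : p.1 ∉ lefts T) : ∃ T', IsRainbowMatching P T' ∧ T'.card = T.card + 1 := by
  obtain ⟨T₂, hT₂, hcard, hcol, hleft, -, hb⟩ := h
  have hu₂ : u ∉ colors T₂ := fun h => hu (hcol h)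
  refine ⟨insert (u, p) T₂, hT₂.insert hp hu₂ (fun h => ha (hleft h)) hb, ?_⟩
  rw [card_insert_of_notMem (fun h => hu₂ (mem_image_of_mem _ h)), hcard]

/-- Freeing `p.2` and then adding the edge `p` of colour `u` frees the right end `x₀.2.2` that
was matched to `p.1`. -/
theorem extend (h : CanFree P T W S p.2) (hu : u ∉ colors T ∪ W) (hp : p ∈ P u)
    {x₀ : ι × α × β} (hx₀ : x₀ ∈ T) (ha : x₀.2.1 = p.1) (hS : x₀.2.2 ∉ S) :
    CanFree P T (insert u W) (insert x₀.2.2 S) x₀.2.2 := by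
  obtain ⟨T₂, hT₂, hcard, hcol, hleft, hkeep, hb⟩ := h
  have hx₀₂ : x₀ ∈ T₂ := hkeep (mem_filter.2 ⟨hx₀, hS⟩)
  have herase : T₂.erase x₀ ⊆ T₂ := erase_subset _ _
  have hu₂ : u ∉ colors (T₂.erase x₀) := fun h => hu (hcol (image_subset_image herase h))
  refine ⟨insert (u, p) (T₂.erase x₀), ?_, ?_, ?_, ?_, ?_, ?_⟩
  · exact (hT₂.mono herase).insert hp hu₂ (ha ▸ notMem_image_erase hT₂.injOn_left hx₀₂)
      (fun h => hb (image_subset_image herase h))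
  · have hpos : 0 < T₂.card := card_pos.2 ⟨x₀, hx₀₂⟩
    rw [card_insert_of_notMem (fun h => hu₂ (mem_image_of_mem _ h)), card_erase_of_mem hx₀₂]
    omega
  · rw [colors, image_insert]
    refine insert_subset (by simp) ((image_subset_image herase).trans (hcol.trans ?_))
    exact union_subset_union subset_rfl (subset_insert _ _)
  · rw [lefts, image_insert]
    exact insert_subset (ha ▸ mem_image_of_mem _ hx₀) ((image_subset_image herase).trans hleft)
  · intro x hx
    simp only [mem_filter, mem_insert, not_or] at hx
    exact mem_insert_of_mem (mem_erase.2 ⟨fun h => hx.2.1 (h ▸ rfl), hkeep (mem_filter.2 ⟨hx.1, hx.2.2⟩)⟩)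
  · rw [rights, image_insert, mem_insert, not_or]
    exact ⟨fun h => hb (h ▸ mem_image_of_mem _ hx₀₂), notMem_image_erase hT₂.injOn_right hx₀₂⟩

end CanFree

theorem exists_canFree_of_not_augmentable (hP : ∀ i, IsBipartiteMatching (P i))
    (hT : IsRainbowMatching P T) (hmax : ¬ ∃ T', IsRainbowMatching P T' ∧ T'.card = T.card + 1)
    (W : Finset ι) (hW : Disjoint W (colors T)) (hPW : ∀ u ∈ W, T.card < (P u).card) :
    ∃ S ⊆ rights T, W.card ≤ S.card ∧ ∀ b ∈ S, CanFree P T W S b := by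
  induction W using Finset.induction_on with
  | empty => exact ⟨∅, empty_subset _, le_rfl, by simp⟩
  | insert u W hu ih =>
    obtain ⟨S, hSsub, hScard, hS⟩ := ih (hW.mono_left (subset_insert _ _))
      (fun v hv => hPW v (mem_insert_of_mem hv))
    have huT : u ∉ colors T ∪ W := by
      simp [hu, disjoint_left.1 hW (mem_insert_self u W)]
    obtain ⟨p, hpP, hpS, hpx⟩ :=
      (hP u).exists_compatible_edge hT hSsub (hPW u (mem_insert_self u W))
    have hfree : CanFree P T W S p.2 := by
      by_cases hb : p.2 ∈ rights T
      · exact hS _ (hpS hb)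
      · exact canFree_of_notMem_rights hT hb
    by_cases ha : p.1 ∈ lefts T
    · obtain ⟨x₀, hx₀, hx₀a⟩ := mem_image.1 ha
      have hx₀S : x₀.2.2 ∉ S := hpx x₀ hx₀ hx₀a
      refine ⟨insert x₀.2.2 S, insert_subset (mem_image_of_mem _ hx₀) hSsub, ?_, ?_⟩
      · rw [card_insert_of_notMem hu, card_insert_of_notMem hx₀S]
        omega
      · simp only [mem_insert, forall_eq_or_imp]
        exact ⟨hfree.extend huT hpP hx₀ hx₀a hx₀S,
          fun b hb => (hS b hb).mono (subset_insert _ _) (subset_insert _ _)⟩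
    · exact (hmax (hfree.augment huT hpP ha)).elim

theorem IsRainbowMatching.exists_card_add_one (hP : ∀ i, IsBipartiteMatching (P i))
    (hT : IsRainbowMatching P T) (U : Finset ι) (hU : Disjoint U (colors T))
    (hUcard : T.card < U.card) (hPU : ∀ u ∈ U, T.card < (P u).card) :
    ∃ T', IsRainbowMatching P T' ∧ T'.card = T.card + 1 := by
  by_contra hmax
  obtain ⟨S, hS, hcard, -⟩ := exists_canFree_of_not_augmentable hP hT hmax U hU hPU
  have hST : S.card ≤ T.card := hT.card_rights ▸ card_le_card hS
  omega

theorem exists_isRainbowMatching [Fintype ι] (hP : ∀ i, IsBipartiteMatching (P i)) {n : ℕ}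
    (hn : 2 * n ≤ Fintype.card ι + 1) (hPn : ∀ i, n ≤ (P i).card) :
    ∃ T, IsRainbowMatching P T ∧ T.card = n := by
  induction n with
  | zero => exact ⟨∅, isRainbowMatching_empty, rfl⟩
  | succ n ih =>
    obtain ⟨T, hT, rfl⟩ := ih (by omega) (fun i => (Nat.le_succ _).trans (hPn i))
    refine hT.exists_card_add_one hP (colors T)ᶜ disjoint_compl_left ?_ (fun u _ => hPn u)
    rw [card_compl, hT.card_colors]
    omega

end Drisko

theorem IsMatching.eq_of_mem_of_mem {M : Set (Sym2 V)} (hM : IsMatching M) {e f : Sym2 V}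
    (he : e ∈ M) (hf : f ∈ M) {v : V} (hve : v ∈ e) (hvf : v ∈ f) : e = f :=
  by_contra fun hef => hM.2 e he f hf hef v hve hvf

theorem injective_sym2_mk {κ : Type*} {a b : κ → V} (ha : Injective a) (hab : ∀ i j, a i ≠ b j) :
    Injective fun j => s(a j, b j) := by
  intro i j h
  rcases Sym2.eq_iff.1 h with ⟨h, -⟩ | ⟨h, -⟩
  exacts [ha h, (hab i j h).elim]

theorem isMatching_image_sym2_mk [DecidableEq V] {κ : Type*} [Fintype κ] {a b : κ → V}
    (ha : Injective a) (hb : Injective b) (hab : ∀ i j, a i ≠ b j) :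
    IsMatching ((univ.image fun j => s(a j, b j) : Finset (Sym2 V)) : Set (Sym2 V)) := by
  refine ⟨?_, ?_⟩
  · simp only [coe_image, coe_univ, Set.image_univ, Set.forall_mem_range, Sym2.mk_isDiag_iff]
    exact fun j => hab j j
  · simp only [coe_image, coe_univ, Set.image_univ, Set.forall_mem_range]
    intro i j hij v hvi hvj
    have hne : i ≠ j := fun h => hij (h ▸ rfl)
    rcases Sym2.mem_iff.1 hvi with rfl | rfl <;> rcases Sym2.mem_iff.1 hvj with h | h
    exacts [hne (ha h), hab i j h, hab j i h.symm, hne (hb h)]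

noncomputable def orient (c : V → Bool) (e : Sym2 V) : V × V :=
  if c e.out.1 then e.out else e.out.swap

theorem mk_orient (c : V → Bool) (e : Sym2 V) : s((orient c e).1, (orient c e).2) = e := by
  unfold orient
  split_ifs
  · exact e.out_eq
  · rw [Prod.fst_swap, Prod.snd_swap, Sym2.eq_swap]
    exact e.out_eq

theorem orient_injective (c : V → Bool) : Injective (orient c) := fun e f h => by
  rw [← mk_orient c e, ← mk_orient c f, h]

theorem fst_orient_mem (c : V → Bool) (e : Sym2 V) : (orient c e).1 ∈ e := by
  simpa only [mk_orient] using Sym2.mem_mk_left (orient c e).1 (orient c e).2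

theorem snd_orient_mem (c : V → Bool) (e : Sym2 V) : (orient c e).2 ∈ e := by
  simpa only [mk_orient] using Sym2.mem_mk_right (orient c e).1 (orient c e).2

theorem orient_color {c : V → Bool} {e : Sym2 V} (he : ∀ u v : V, e = s(u, v) → c u ≠ c v) :
    c (orient c e).1 = true ∧ c (orient c e).2 = false := by
  have hne := he e.out.1 e.out.2 e.out_eq.symm
  unfold orient
  split_ifs with h
  · simp_all
  · simp_all

theorem isBipartiteMatching_image_orient [DecidableEq V] (c : V → Bool) {M : Finset (Sym2 V)}
    (hM : IsMatching (M : Set (Sym2 V))) : Drisko.IsBipartiteMatching (M.image (orient c)) := by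
  simp only [Drisko.IsBipartiteMatching, coe_image]
  constructor
  · rintro _ ⟨e, he, rfl⟩ _ ⟨f, hf, rfl⟩ h
    refine congrArg _ (hM.eq_of_mem_of_mem he hf (fst_orient_mem c e) ?_)
    rw [h]
    exact fst_orient_mem c f
  · rintro _ ⟨e, he, rfl⟩ _ ⟨f, hf, rfl⟩ h
    refine congrArg _ (hM.eq_of_mem_of_mem he hf (snd_orient_mem c e) ?_)
    rw [h]
    exact snd_orient_mem c f

theorem hasRainbow_of_isRainbowMatching [DecidableEq V] {m n : ℕ} {M : Fin m → Finset (Sym2 V)}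
    {c : V → Bool} {P : Fin m → Finset (V × V)}
    (hP : ∀ i, ∀ p ∈ P i, s(p.1, p.2) ∈ M i ∧ c p.1 = true ∧ c p.2 = false)
    {T : Finset (Fin m × V × V)} (hT : Drisko.IsRainbowMatching P T) (hn : T.card = n) :
    HasRainbow n M := by
  set g := (T.equivFinOfCardEq hn).symm
  have hgP : ∀ j, s((g j).1.2.1, (g j).1.2.2) ∈ M (g j).1.1 ∧ c (g j).1.2.1 = true ∧
      c (g j).1.2.2 = false := fun j => hP _ _ (hT.mem _ (g j).2)
  have hab : ∀ i j, (g i).1.2.1 ≠ (g j).1.2.2 := fun i j h => by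
    have := (hgP i).2.1
    rw [h, (hgP j).2.2] at this
    exact Bool.false_ne_true this
  have ha : Injective fun j => (g j).1.2.1 := hT.injOn_left.injective.comp g.injective
  exact ⟨fun j => (g j).1.1, fun j => s((g j).1.2.1, (g j).1.2.2),
    hT.injOn_color.injective.comp g.injective, fun j => (hgP j).1, injective_sym2_mk ha hab,
    isMatching_image_sym2_mk ha (hT.injOn_right.injective.comp g.injective) hab⟩

/-- Drisko: any family of `2n−1` matchings of size `n` in a bipartite graph
(witnessed by a 2-coloring `c` making every edge bichromatic) has a rainbow matching of size `n`. -/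
theorem stmt_2 {V : Type*} [DecidableEq V] (n : ℕ) (c : V → Bool)
    (M : Fin (2 * n - 1) → Finset (Sym2 V))
    (hM : ∀ i, IsMatching ((M i : Finset (Sym2 V)) : Set (Sym2 V)) ∧ (M i).card = n)
    (hbip : ∀ i, ∀ e ∈ M i, ∀ u v : V, e = s(u, v) → c u ≠ c v) :
    HasRainbow n M := by
  set P := fun i => (M i).image (orient c)
  obtain ⟨T, hT, hTn⟩ := Drisko.exists_isRainbowMatching (P := P) (n := n)
    (fun i => isBipartiteMatching_image_orient c (hM i).1) (by simp only [Fintype.card_fin]; omega)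
    (fun i => by rw [card_image_of_injective _ (orient_injective c), (hM i).2])
  refine hasRainbow_of_isRainbowMatching (c := c) (fun i p hp => ?_) hT hTn
  obtain ⟨e, he, rfl⟩ := mem_image.1 hp
  exact ⟨(mk_orient c e).symm ▸ he, orient_color (hbip i e he)⟩
end

section
/- For every n ≥ 1 there exists a family of 2n−2 matchings, each of size n, in a bipartite graph, that has no rainbow matching of size n. Concretely, taking n−1 copies of one perfect matching of the cycle C_{2n} and n−1 copies of the other perfect matching gives such a family. -/
/-!
Colour the vertices of `C_{2n} = ZMod (2n)` by parity. The two perfect matchings of the cycle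
consist of the edges `s(v, v + 1)` with `v` even, resp. with `v` odd. A rainbow matching of size
`n` is a perfect matching of `C_{2n}`, and perfectness propagates: if `s(v, v + 1)` is used, the
vertex `v + 2` can only be covered by `s(v + 2, v + 3)`. Hence all its edges start at vertices of
one parity, so it is one of the two perfect matchings, and its `n` edges would have to come from
the `n - 1` copies of that matching.
-/

variable {V : Type*}

/-- The edge set of the cycle on the `n` vertices `ZMod n` (vertices in cyclic order). -/
def cycleEdges (n : ℕ) : Finset (Sym2 (ZMod n)) :=
  (Finset.range n).image fun i : ℕ => s((i : ZMod n), (i : ZMod n) + 1)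

open Finset

theorem IsMatching.covered_of_card_eq [Fintype V] [DecidableEq V]
    {S : Finset (Sym2 V)} (hS : IsMatching (S : Set (Sym2 V))) (hcard : Fintype.card V = 2 * #S)
    (v : V) : covered (S : Set (Sym2 V)) v := by
  have hdisj : (S : Set (Sym2 V)).PairwiseDisjoint Sym2.toFinset := fun e he f hf hne =>
    disjoint_left.2 fun v hve hvf =>
      hS.2 e he f hf hne v (Sym2.mem_toFinset.1 hve) (Sym2.mem_toFinset.1 hvf)
  have hunion : S.biUnion Sym2.toFinset = univ := by
    apply eq_univ_of_card
    rw [card_biUnion hdisj, sum_congr rfl fun e he => Sym2.card_toFinset_of_not_isDiag e (hS.1 e he),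
      sum_const, smul_eq_mul, hcard, mul_comm]
  obtain ⟨e, he, hv⟩ := mem_biUnion.1 (hunion ▸ mem_univ v)
  exact ⟨e, he, Sym2.mem_toFinset.1 hv⟩

theorem mem_cycleEdges {m : ℕ} [NeZero m] {e : Sym2 (ZMod m)} :
    e ∈ cycleEdges m ↔ ∃ v, e = s(v, v + 1) := by
  simp only [cycleEdges, mem_image, mem_range]
  constructor
  · rintro ⟨i, -, rfl⟩
    exact ⟨i, rfl⟩
  · rintro ⟨v, rfl⟩
    exact ⟨v.val, v.val_lt, by rw [ZMod.natCast_zmod_val]⟩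

namespace EvenCycle

variable {n : ℕ}

def parity (n : ℕ) : ZMod (2 * n) →+* ZMod 2 := ZMod.castHom (dvd_mul_right 2 n) (ZMod 2)

theorem parity_add_one_ne (x : ZMod (2 * n)) : parity n (x + 1) ≠ parity n x := by
  rw [map_add, map_one]
  exact (by decide : ∀ a : ZMod 2, a + 1 ≠ a) _

theorem add_one_ne_self (x : ZMod (2 * n)) : x + 1 ≠ x := fun h =>
  parity_add_one_ne x (congrArg (parity n) h)

theorem parity_ne_of_mk_mem_cycleEdges [NeZero n] {u v : ZMod (2 * n)}
    (h : s(u, v) ∈ cycleEdges (2 * n)) : parity n u ≠ parity n v := by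
  obtain ⟨w, hw⟩ := mem_cycleEdges.1 h
  rcases Sym2.eq_iff.1 hw with ⟨rfl, rfl⟩ | ⟨rfl, rfl⟩
  · exact (parity_add_one_ne _).symm
  · exact parity_add_one_ne _

theorem exists_eq_two_mul_of_parity_eq_zero [NeZero n] {z : ZMod (2 * n)}
    (h : parity n z = 0) : ∃ k : ℕ, z = 2 * k := by
  rw [← ZMod.natCast_zmod_val z, map_natCast, ZMod.natCast_eq_zero_iff] at h
  obtain ⟨k, hk⟩ := h
  exact ⟨k, by rw [← ZMod.natCast_zmod_val z, hk]; push_cast; rfl⟩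

theorem card_filter_parity_eq [NeZero n] (a : ZMod 2) :
    #({v | parity n v = a} : Finset (ZMod (2 * n))) = n := by
  have hshift : #({v | parity n v = a} : Finset (ZMod (2 * n))) = #{v | parity n v ≠ a} := by
    refine card_equiv (Equiv.addRight 1) fun v => ?_
    simp only [mem_filter, mem_univ, true_and, Equiv.coe_addRight, map_add, map_one]
    exact (by decide : ∀ a b : ZMod 2, b = a ↔ b + 1 ≠ a) _ _
  have hsum := card_filter_add_card_filter_not (s := (univ : Finset (ZMod (2 * n))))
    (fun v => parity n v = a)
  rw [← hshift, card_univ, ZMod.card] at hsum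
  omega

def cycleMatching (n : ℕ) [NeZero n] (a : ZMod 2) : Finset (Sym2 (ZMod (2 * n))) :=
  ({v | parity n v = a} : Finset (ZMod (2 * n))).image fun v => s(v, v + 1)

theorem mem_cycleMatching [NeZero n] {a : ZMod 2} {e : Sym2 (ZMod (2 * n))} :
    e ∈ cycleMatching n a ↔ ∃ v, parity n v = a ∧ s(v, v + 1) = e := by
  simp [cycleMatching]

theorem eq_of_mem_mk_add_one_of_parity_eq {x y v : ZMod (2 * n)}
    (hxy : parity n x = parity n y) (hx : v ∈ s(x, x + 1)) (hy : v ∈ s(y, y + 1)) : x = y := by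
  rcases Sym2.mem_iff.1 hx with rfl | rfl <;> rcases Sym2.mem_iff.1 hy with h | h
  · exact h
  · exact absurd (by rw [← h, hxy]) (parity_add_one_ne y)
  · exact absurd (by rw [h, hxy]) (parity_add_one_ne x)
  · exact add_right_cancel h

theorem cycleMatching_subset [NeZero n] (a : ZMod 2) : cycleMatching n a ⊆ cycleEdges (2 * n) :=
  fun e he => by
    obtain ⟨v, -, rfl⟩ := mem_cycleMatching.1 he
    exact mem_cycleEdges.2 ⟨v, rfl⟩

theorem isMatching_cycleMatching [NeZero n] (a : ZMod 2) :
    IsMatching (cycleMatching n a : Set (Sym2 (ZMod (2 * n)))) := by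
  constructor
  · intro e he
    obtain ⟨v, -, rfl⟩ := mem_cycleMatching.1 he
    rw [Sym2.mk_isDiag_iff]
    exact (add_one_ne_self v).symm
  · intro e he f hf hne v hve hvf
    obtain ⟨x, hx, rfl⟩ := mem_cycleMatching.1 he
    obtain ⟨y, hy, rfl⟩ := mem_cycleMatching.1 hf
    exact hne (by rw [eq_of_mem_mk_add_one_of_parity_eq (hx.trans hy.symm) hve hvf])

theorem card_cycleMatching [NeZero n] (a : ZMod 2) : #(cycleMatching n a) = n := by
  rw [cycleMatching, card_image_of_injOn, card_filter_parity_eq]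
  intro x hx y hy hxy
  have hxy : s(x, x + 1) = s(y, y + 1) := hxy
  rw [mem_coe, mem_filter] at hx hy
  exact eq_of_mem_mk_add_one_of_parity_eq (hx.2.trans hy.2.symm) (Sym2.mem_mk_left x _)
    (hxy ▸ Sym2.mem_mk_left x _)

theorem mk_add_one_inj (hn : 2 ≤ n) {x y : ZMod (2 * n)} : s(x, x + 1) = s(y, y + 1) ↔ x = y := by
  refine ⟨fun h => ?_, fun h => h ▸ rfl⟩
  have htwo : (2 : ZMod (2 * n)) ≠ 0 := by
    have : NeZero (2 * n) := ⟨by omega⟩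
    rw [← ZMod.val_ne_zero, show (2 : ZMod (2 * n)) = ((2 : ℕ) : ZMod (2 * n)) by norm_cast,
      ZMod.val_natCast_of_lt (by omega)]
    norm_num
  rcases Sym2.eq_iff.1 h with ⟨hxy, -⟩ | ⟨hxy, hyx⟩
  · exact hxy
  · exact absurd (by linear_combination hyx - hxy) htwo

theorem mk_add_two_mem_of_mk_mem [NeZero n] (hn : 2 ≤ n) {S : Finset (Sym2 (ZMod (2 * n)))}
    (hScycle : S ⊆ cycleEdges (2 * n)) (hS : IsMatching (S : Set (Sym2 (ZMod (2 * n)))))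
    (hcard : #S = n) {x : ZMod (2 * n)} (hx : s(x, x + 1) ∈ S) : s(x + 2, x + 2 + 1) ∈ S := by
  obtain ⟨e, he, hxe⟩ := hS.covered_of_card_eq (by rw [ZMod.card, hcard]) (x + 2)
  obtain ⟨w, rfl⟩ := mem_cycleEdges.1 (hScycle he)
  rcases Sym2.mem_iff.1 hxe with hw | hw
  · rwa [hw]
  · have hw' : w = x + 1 := by linear_combination -hw
    subst hw'
    refine absurd (Sym2.mem_mk_left (x + 1) _) (hS.2 _ hx _ he ?_ (x + 1) (Sym2.mem_mk_right _ _))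
    rw [Ne, mk_add_one_inj hn]
    exact (add_one_ne_self x).symm

theorem parity_eq_of_mk_mem [NeZero n] (hn : 2 ≤ n) {S : Finset (Sym2 (ZMod (2 * n)))}
    (hScycle : S ⊆ cycleEdges (2 * n)) (hS : IsMatching (S : Set (Sym2 (ZMod (2 * n)))))
    (hcard : #S = n) {x y : ZMod (2 * n)} (hx : s(x, x + 1) ∈ S) (hy : s(y, y + 1) ∈ S) :
    parity n x = parity n y := by
  have hshift (k : ℕ) : s(x + 2 * k, x + 2 * k + 1) ∈ S := by
    induction k with
    | zero => simpa using hx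
    | succ k ih =>
      have h := mk_add_two_mem_of_mk_mem hn hScycle hS hcard ih
      rwa [show x + 2 * k + 2 = x + 2 * ↑(k + 1) by push_cast; ring] at h
  by_contra hne
  obtain ⟨k, hk⟩ := exists_eq_two_mul_of_parity_eq_zero (z := y - 1 - x) (by
    rw [map_sub, map_sub, map_one]
    exact (by decide : ∀ a b : ZMod 2, a ≠ b → b - 1 - a = 0) _ _ hne)
  have hprev := hshift k
  rw [← hk, add_sub_cancel] at hprev
  refine hS.2 _ hprev _ hy ?_ y (by rw [sub_add_cancel]; exact Sym2.mem_mk_right _ _)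
    (Sym2.mem_mk_left _ _)
  rw [Ne, mk_add_one_inj hn]
  exact fun h => add_one_ne_self (y - 1) (by rw [sub_add_cancel, h])

def memberParity (n : ℕ) (i : Fin (2 * n - 2)) : ZMod 2 := if (i : ℕ) < n - 1 then 0 else 1

theorem card_filter_memberParity_eq (a : ZMod 2) :
    #({i | memberParity n i = a} : Finset (Fin (2 * n - 2))) = n - 1 := by
  have hsum := card_filter_add_card_filter_not (s := (univ : Finset (Fin (2 * n - 2))))
    (fun i => (i : ℕ) < n - 1)
  rw [Fin.card_filter_val_lt, card_univ, Fintype.card_fin] at hsum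
  obtain rfl | rfl : a = 0 ∨ a = 1 := by revert a; decide
  · rw [filter_congr fun i _ => show memberParity n i = 0 ↔ (i : ℕ) < n - 1 by
      unfold memberParity; split_ifs <;> simp_all, Fin.card_filter_val_lt]
    omega
  · rw [filter_congr fun i _ => show memberParity n i = 1 ↔ ¬ (i : ℕ) < n - 1 by
      unfold memberParity; split_ifs <;> simp_all]
    omega

theorem not_hasRainbow_cycleMatching [NeZero n] :
    ¬ HasRainbow n fun i => cycleMatching n (memberParity n i) := by
  rintro ⟨f, e, hf, he, he_inj, hmatch⟩
  let j₀ : Fin n := ⟨0, Nat.pos_of_neZero n⟩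
  have hn : 2 ≤ n := by
    have := (f j₀).isLt
    omega
  have hcard : #(image e univ) = n := by
    rw [card_image_of_injective _ he_inj, card_univ, Fintype.card_fin]
  have hScycle : image e univ ⊆ cycleEdges (2 * n) := by
    intro x hx
    obtain ⟨j, -, rfl⟩ := mem_image.1 hx
    exact cycleMatching_subset _ (he j)
  choose v hv hve using fun j => mem_cycleMatching.1 (he j)
  have hmem (j : Fin n) : s(v j, v j + 1) ∈ image e univ :=
    hve j ▸ mem_image_of_mem e (mem_univ j)
  have hconst (j : Fin n) : memberParity n (f j) = memberParity n (f j₀) := by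
    rw [← hv j, ← hv j₀]
    exact parity_eq_of_mk_mem hn hScycle hmatch hcard (hmem j) (hmem j₀)
  have hle := card_le_card_of_injOn f (s := univ)
    (t := {i | memberParity n i = memberParity n (f j₀)}) (fun j _ => by simp [hconst j])
    hf.injOn
  rw [card_univ, Fintype.card_fin, card_filter_memberParity_eq] at hle
  omega

end EvenCycle

open EvenCycle

/-- for every `n ≥ 1` there is a family of `2n−2` matchings of size `n` in a
bipartite graph (matchings of the cycle `C_{2n}`) with no rainbow matching of size `n`. -/
theorem stmt_3 (n : ℕ) (hn : 1 ≤ n) :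
    ∃ M : Fin (2 * n - 2) → Finset (Sym2 (ZMod (2 * n))),
      (∀ i, IsMatching ((M i : Finset (Sym2 (ZMod (2 * n)))) : Set (Sym2 (ZMod (2 * n)))) ∧
        (M i).card = n ∧ M i ⊆ cycleEdges (2 * n)) ∧
      (∃ c : ZMod (2 * n) → Bool, ∀ i, ∀ e ∈ M i, ∀ u v, e = s(u, v) → c u ≠ c v) ∧
      ¬ HasRainbow n M := by
  have : NeZero n := ⟨by omega⟩
  refine ⟨fun i => cycleMatching n (memberParity n i),
    fun i => ⟨isMatching_cycleMatching _, card_cycleMatching _, cycleMatching_subset _⟩,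
    ⟨fun v => decide (parity n v = 0), fun i e he u v huv => ?_⟩, not_hasRainbow_cycleMatching⟩
  have hne := parity_ne_of_mk_mem_cycleEdges (huv ▸ cycleMatching_subset _ he)
  exact (by decide : ∀ a b : ZMod 2, a ≠ b → decide (a = 0) ≠ decide (b = 0)) _ _ hne
end

section
/- Let F be a matching in G covering all vertices except a, K = E(G) \ F. A vertex x covered by F is oddly K-reachable from a if and only if its F-partner F(x) is evenly K-reachable from a. -/
variable {V : Type*}

/-- `x` is evenly `K`-reachable from `a`: there is a `K`–`F`-alternating path from `a` to `x`
with an even number of edges (an odd number of vertices); `x = a` via the empty path. -/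
def evenReach (K F : Set (Sym2 V)) (a x : V) : Prop :=
  ∃ (p : List V) (hp : p ≠ []), AltPath K F p ∧ p.head hp = a ∧ p.getLast hp = x ∧
    Odd p.length

/-- `x` is oddly `K`-reachable from `a`: there is a `K`–`F`-alternating path from `a` to `x`
with an odd number of edges (an even, positive, number of vertices). -/
def oddReach (K F : Set (Sym2 V)) (a x : V) : Prop :=
  ∃ (p : List V) (hp : p ≠ []), AltPath K F p ∧ p.head hp = a ∧ p.getLast hp = x ∧
    Even p.length

/-!
Appending `y` to an odd alternating path from `a` to `x` gives an even one, and the last edge of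
an even alternating path from `a` to `y` is an `F`-edge, hence `s(x, y)`, so dropping `y` gives an
odd one. The only point is that `y` does not already lie on the odd path: its `F`-edges match
every vertex except the uncovered start `a` and the end `x` within the path, so `y` on the path
would place its partner `x` at a second position.
-/

section

variable {K F : Set (Sym2 V)}

theorem IsMatching.ne_of_mk_mem_s9 (hF : IsMatching F) {x y : V} (h : s(x, y) ∈ F) : x ≠ y :=
  fun hxy => hF.1 _ h (by simp [hxy])

theorem IsMatching.eq_of_mk_mem_of_mk_mem (hF : IsMatching F) {u v w : V}
    (hv : s(u, v) ∈ F) (hw : s(u, w) ∈ F) : v = w := by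
  by_contra hvw
  exact hF.2 _ hv _ hw (mt Sym2.congr_right.mp hvw) u (Sym2.mem_mk_left u v) (Sym2.mem_mk_left u w)

theorem AltPath.mk_mem_of_odd {p : List V} (hp : AltPath K F p) {i : ℕ} (hi : i % 2 = 1)
    (h : i + 1 < p.length) : s(p[i], p[i + 1]) ∈ F := by
  simpa [hi] using hp.2.2 i h

theorem AltPath.exists_mk_mem_of_even_length {p : List V} (hp : AltPath K F p)
    (hlen : Even p.length) {j : ℕ} (hj0 : 0 < j) (hj : j + 1 < p.length) :
    ∃ (k : ℕ) (hk : k + 1 < p.length), s(p[j], p[k]) ∈ F := by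
  obtain ⟨m, hm⟩ := hlen
  rcases Nat.even_or_odd j with ⟨n, hn⟩ | ⟨n, hn⟩
  · refine ⟨j - 1, by omega, ?_⟩
    have hj' : j - 1 + 1 = j := by omega
    have := hp.mk_mem_of_odd (i := j - 1) (by omega) (by omega)
    simp only [hj'] at this
    rwa [Sym2.eq_swap]
  · exact ⟨j + 1, by omega, hp.mk_mem_of_odd (by omega) hj⟩

theorem AltPath.concat {p : List V} (hp : AltPath K F p) (hne : p ≠ []) {y : V} (hy : y ∉ p)
    (hlast : s(p.getLast hne, y) ∈ (if (p.length - 1) % 2 = 0 then K else F)) :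
    AltPath K F (p ++ [y]) := by
  refine ⟨by simp, List.nodup_append.2 ⟨hp.2.1, List.nodup_singleton y, ?_⟩, fun i h => ?_⟩
  · rintro b hb c hc rfl
    exact hy (by simpa [List.mem_singleton.1 hc] using hb)
  · simp only [List.length_append, List.length_singleton] at h
    rcases Nat.lt_or_ge (i + 1) p.length with hi | hi
    · rw [List.getElem_append_left (by omega), List.getElem_append_left hi]
      exact hp.2.2 i hi
    · obtain rfl : i = p.length - 1 := by omega
      rw [List.getElem_append_left (by omega), List.getElem_concat_length (by omega)]
      simpa [List.getLast_eq_getElem] using hlast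

theorem AltPath.dropLast {p : List V} (hp : AltPath K F p) (hne : p.dropLast ≠ []) :
    AltPath K F p.dropLast := by
  refine ⟨hne, hp.2.1.sublist (List.dropLast_sublist p), fun i h => ?_⟩
  simp only [List.getElem_dropLast]
  exact hp.2.2 i (by simp at h; omega)

theorem AltPath.not_mem_of_mk_mem (hF : IsMatching F) {p : List V} (hp : AltPath K F p)
    (hne : p ≠ []) (hhead : ¬ covered F (p.head hne)) (hlen : Even p.length) {y : V}
    (hy : s(p.getLast hne, y) ∈ F) : y ∉ p := by
  intro hyp
  obtain ⟨j, hj, rfl⟩ := List.getElem_of_mem hyp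
  have hj0 : 0 < j := by
    refine Nat.pos_of_ne_zero fun h => hhead ⟨_, hy, ?_⟩
    simp [List.head_eq_getElem, h]
  have hj1 : j + 1 < p.length := by
    by_contra h
    refine hF.ne_of_mk_mem_s9 hy ?_
    simp [List.getLast_eq_getElem, show j = p.length - 1 by omega]
  obtain ⟨k, hk, hjk⟩ := hp.exists_mk_mem_of_even_length hlen hj0 hj1
  have hk_last : p[k] = p.getLast hne := hF.eq_of_mk_mem_of_mk_mem hjk (by rwa [Sym2.eq_swap])
  rw [List.getLast_eq_getElem, hp.2.1.getElem_inj_iff] at hk_last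
  omega

theorem evenReach_of_oddReach (hF : IsMatching F) {a x y : V} (ha : ¬ covered F a)
    (hxy : s(x, y) ∈ F) (hx : oddReach K F a x) : evenReach K F a y := by
  obtain ⟨p, hne, hp, rfl, rfl, hlen⟩ := hx
  have hy := hp.not_mem_of_mk_mem hF hne ha hlen hxy
  refine ⟨p ++ [y], by simp, hp.concat hne hy ?_, ?_, by simp, by simpa using hlen.add_one⟩
  · have hpos := List.length_pos_iff.2 hne
    obtain ⟨m, hm⟩ := hlen
    rwa [if_neg (by omega)]
  · simp [List.head_append_of_ne_nil hne]

theorem oddReach_of_evenReach (hF : IsMatching F) {a x y : V} (ha : ¬ covered F a)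
    (hxy : s(x, y) ∈ F) (hy : evenReach K F a y) : oddReach K F a x := by
  obtain ⟨p, hne, hp, rfl, rfl, hlen⟩ := hy
  have hlen3 : 3 ≤ p.length := by
    obtain ⟨m, hm⟩ := hlen
    by_contra h
    refine ha ⟨_, hxy, ?_⟩
    simp [List.head_eq_getElem, List.getLast_eq_getElem, show p.length - 1 = 0 by omega]
  have hdl : p.dropLast ≠ [] := by
    rw [← List.length_pos_iff, List.length_dropLast]
    omega
  refine ⟨p.dropLast, hdl, hp.dropLast hdl, ?_, ?_, ?_⟩
  · simp [List.head_eq_getElem]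
  · rw [List.getLast_dropLast]
    have hodd : (p.length - 2) % 2 = 1 := by obtain ⟨m, hm⟩ := hlen; omega
    have hlast := hp.mk_mem_of_odd hodd (by omega)
    simp only [show p.length - 2 + 1 = p.length - 1 by omega, ← List.getLast_eq_getElem hne]
      at hlast
    rw [Sym2.eq_swap] at hlast hxy
    exact hF.eq_of_mk_mem_of_mk_mem hlast hxy
  · obtain ⟨m, hm⟩ := hlen
    exact ⟨m, by simp; omega⟩

end

theorem stmt_9_general {V : Type*} (E F : Set (Sym2 V)) (a : V)
    (hF : IsMatching F) (hna : ¬ covered F a)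
    (x y : V) (hxy : s(x, y) ∈ F) :
    oddReach (E \ F) F a x ↔ evenReach (E \ F) F a y :=
  ⟨evenReach_of_oddReach hF hna hxy, oddReach_of_evenReach hF hna hxy⟩

/-- `F` a matching covering all vertices except `a`, `K = E \ F`.  A vertex `x`
matched by `F` to `y` is oddly `K`-reachable from `a` iff `y = F(x)` is evenly `K`-reachable
from `a`. -/
theorem stmt_9 {V : Type*} (E F : Set (Sym2 V)) (a : V)
    (hE : ∀ e ∈ E, ¬ e.IsDiag) (hFE : F ⊆ E) (hF : IsMatching F)
    (hna : ¬ covered F a) (hcov : ∀ v, v ≠ a → covered F v)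
    (x y : V) (hxy : s(x, y) ∈ F) :
    oddReach (E \ F) F a x ↔ evenReach (E \ F) F a y :=
  stmt_9_general E F a hF hna x y hxy
end

section
/- Let F be a maximum matching of G, K = E(G)\F, and (Q,R,S) a Gallai–Edmonds decomposition with components H_i of G−S and special vertices r_i. Then every vertex oddly K-reachable from a vertex not covered by F lies in S ∪ ⋃_{i∈I}(V(H_i)\{r_i}); that is, OR(K,F) ⊆ S ∪ ⋃_{i∈I}(V(H_i) \ {r_i}). -/
variable {V : Type*}

/-- A maximum matching of the graph with edge set `E`. -/
def IsMaxMatching (E F : Set (Sym2 V)) : Prop :=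
  F ⊆ E ∧ IsMatching F ∧ ∀ M ⊆ E, IsMatching M → M.ncard ≤ F.ncard

/-- The edges of `F` contained in the vertex set `C` (the induced edge set `F[C]`). -/
def edgesIn (F : Set (Sym2 V)) (C : Set V) : Set (Sym2 V) := {e ∈ F | ∀ u ∈ e, u ∈ C}

/-- The edges of `E` avoiding the vertex set `S` (edges of `G − S`). -/
def avoid (E : Set (Sym2 V)) (S : Set V) : Set (Sym2 V) := {e ∈ E | ∀ u ∈ e, u ∉ S}

/-- The connected component of `v` in the graph with edge set `E'`. -/
def comp (E' : Set (Sym2 V)) (v : V) : Set V :=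
  {u | Relation.ReflTransGen (fun a b => s(a, b) ∈ E') v u}

/-- The induced subgraph on `C` is hypomatchable (factor-critical): for every `v ∈ C` there
is a matching inside `C` covering exactly `C \ {v}`. -/
def Hypomatchable (E : Set (Sym2 V)) (C : Set V) : Prop :=
  ∀ v ∈ C, ∃ M ⊆ edgesIn E C, IsMatching M ∧ ¬ covered M v ∧
    ∀ u ∈ C, u ≠ v → covered M u

/-- A Gallai–Edmonds decomposition `(Q, R, S)` of the graph `E` with respect to the maximum
matching `F`: (1) `F[Q]` is a perfect matching of `Q`; (2) `R` is a union of connected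
components of `G − S`, each hypomatchable and matched by `F` within itself except for exactly
one exposed vertex (its `r_i`); (3) every `s ∈ S` is matched by `F` to the exposed vertex
`r_i` of some component. -/
def IsGE (E F : Set (Sym2 V)) (Q R S : Set V) : Prop :=
  Q ∪ R ∪ S = Set.univ ∧ Disjoint Q R ∧ Disjoint Q S ∧ Disjoint R S ∧
  (∀ v ∈ Q, covered (edgesIn F Q) v) ∧
  (∀ v ∈ R, comp (avoid E S) v ⊆ R ∧ Hypomatchable E (comp (avoid E S) v) ∧
    (∃! w, w ∈ comp (avoid E S) v ∧ ¬ covered (edgesIn F (comp (avoid E S) v)) w)) ∧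
  (∀ s ∈ S, ∃ t, s(s, t) ∈ F ∧ t ∈ R ∧ ¬ covered (edgesIn F (comp (avoid E S) t)) t)

/-- `ER(K,F)`: the set of vertices evenly `K`-reachable from some `F`-uncovered vertex. -/
def ERset (K F : Set (Sym2 V)) : Set V := {x | ∃ a, ¬ covered F a ∧ evenReach K F a x}

/-- `OR(K,F)`: the set of vertices oddly `K`-reachable from some `F`-uncovered vertex. -/
def ORset (K F : Set (Sym2 V)) : Set V := {x | ∃ a, ¬ covered F a ∧ oddReach K F a x}


section Aux

variable {V : Type*}

lemma matching_sub {M N : Set (Sym2 V)} (h : N ⊆ M) (hM : IsMatching M) : IsMatching N :=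
  ⟨fun e he => hM.1 e (h he), fun e he f hf hne v hv => hM.2 e (h he) f (h hf) hne v hv⟩

lemma matching_eq {M : Set (Sym2 V)} (hM : IsMatching M) {e f : Sym2 V} {v : V}
    (he : e ∈ M) (hf : f ∈ M) (hve : v ∈ e) (hvf : v ∈ f) : e = f := by
  by_contra hne
  exact hM.2 e he f hf hne v hve hvf

lemma symm_edge_rel (E' : Set (Sym2 V)) : Symmetric (fun a b => s(a, b) ∈ E') := by
  intro a b h
  rwa [Sym2.eq_swap]

lemma mem_comp_self (E' : Set (Sym2 V)) (v : V) : v ∈ comp E' v := Relation.ReflTransGen.refl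

lemma mem_comp_of_edge {E' : Set (Sym2 V)} {u v : V} (h : s(u, v) ∈ E') : v ∈ comp E' u :=
  Relation.ReflTransGen.single h

lemma comp_eq_of_mem {E' : Set (Sym2 V)} {u v : V} (h : u ∈ comp E' v) :
    comp E' u = comp E' v := by
  ext w
  constructor
  · intro hw
    exact Relation.ReflTransGen.trans h hw
  · intro hw
    exact Relation.ReflTransGen.trans (haveI : Std.Symm (fun a b : V => s(a, b) ∈ E') := ⟨symm_edge_rel E'⟩; @Std.Symm.symm _ _ (Relation.ReflTransGen.stdSymm (r := fun a b : V => s(a, b) ∈ E')) _ _ h) hw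

lemma even_ncard_covered [Finite V] :
    ∀ (M : Set (Sym2 V)), IsMatching M → Even {v | covered M v}.ncard := by
  have main : ∀ (M : Set (Sym2 V)), M.Finite →
      IsMatching M → Even {v | covered M v}.ncard := by
    intro M hfin
    refine Set.Finite.induction_on
      (motive := fun N _ => IsMatching N → Even {v | covered N v}.ncard) M hfin ?_ ?_
    · intro _
      have : {v | covered (∅ : Set (Sym2 V)) v} = ∅ := by
        ext v; simp [covered]
      rw [this]
      simp
    · intro a s ha hs ih hmatch
      have hsm : IsMatching s := matching_sub (Set.subset_insert a s) hmatch
      revert ha hmatch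
      induction a using Sym2.inductionOn with
      | hf x y =>
        intro ha hmatch
        have hxy : x ≠ y := by
          intro h
          exact hmatch.1 _ (Set.mem_insert _ _) (Sym2.mk_isDiag_iff.mpr h)
        have hset : {v | covered (insert s(x, y) s) v} = ({x, y} : Set V) ∪ {v | covered s v} := by
          ext v
          constructor
          · rintro ⟨e, he, hv⟩
            rcases Set.mem_insert_iff.mp he with rfl | he'
            · exact Or.inl (Sym2.mem_iff.mp hv)
            · exact Or.inr ⟨e, he', hv⟩
          · rintro (h | ⟨e, he, hv⟩)
            · exact ⟨s(x, y), Set.mem_insert _ _, Sym2.mem_iff.mpr h⟩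
            · exact ⟨e, Set.mem_insert_of_mem _ he, hv⟩
        have hdisj : Disjoint ({x, y} : Set V) {v | covered s v} := by
          rw [Set.disjoint_left]
          rintro v hv ⟨e, he, hve⟩
          have hne : s(x, y) ≠ e := by
            rintro rfl; exact ha he
          exact hmatch.2 s(x, y) (Set.mem_insert _ _) e (Set.mem_insert_of_mem _ he) hne v
            (Sym2.mem_iff.mpr hv) hve
        rw [hset, Set.ncard_union_eq hdisj (Set.toFinite _) (Set.toFinite _),
          Set.ncard_pair hxy]
        exact even_two.add (ih hsm)
  exact fun M hM => main M (Set.toFinite M) hM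

lemma odd_ncard_of_hypo [Finite V] {E : Set (Sym2 V)} {C : Set V} (h : Hypomatchable E C)
    {r : V} (hr : r ∈ C) : Odd C.ncard := by
  obtain ⟨M, hMsub, hMm, hMr, hMcov⟩ := h r hr
  have hcov : {v | covered M v} = C \ {r} := by
    ext v
    constructor
    · rintro ⟨e, he, hv⟩
      refine ⟨(hMsub he).2 v hv, ?_⟩
      rintro rfl
      exact hMr ⟨e, he, hv⟩
    · rintro ⟨hvC, hvr⟩
      exact hMcov v hvC hvr
  have he := even_ncard_covered M hMm
  rw [hcov] at he
  have h1 : (C \ {r}).ncard = C.ncard - 1 := Set.ncard_diff_singleton_of_mem hr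
  have h2 : 0 < C.ncard := (Set.ncard_pos (Set.toFinite _)).mpr ⟨r, hr⟩
  rw [h1] at he
  obtain ⟨k, hk⟩ := he
  exact ⟨k, by omega⟩

lemma exists_leaving [Finite V] {M : Set (Sym2 V)} (hM : IsMatching M) {A : Set V}
    (hodd : Odd A.ncard) (hcov : ∀ v ∈ A, covered M v) :
    ∃ u ∈ A, ∃ z, z ∉ A ∧ s(u, z) ∈ M := by
  by_contra hcon
  push_neg at hcon
  have hin : ∀ e ∈ M, ∀ v ∈ e, v ∈ A → ∀ w ∈ e, w ∈ A := by
    intro e he v hv hvA w hw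
    obtain ⟨z, rfl⟩ := Sym2.mem_iff_exists.mp hv
    by_contra hwA
    rcases Sym2.mem_iff.mp hw with rfl | rfl
    · exact hwA hvA
    · exact hcon v hvA w hwA he
  have hNm : IsMatching {e ∈ M | ∀ v ∈ e, v ∈ A} := matching_sub (Set.sep_subset _ _) hM
  have hNA : {v | covered {e ∈ M | ∀ v ∈ e, v ∈ A} v} = A := by
    ext v
    constructor
    · rintro ⟨e, ⟨he, hall⟩, hv⟩
      exact hall v hv
    · intro hvA
      obtain ⟨e, he, hv⟩ := hcov v hvA
      exact ⟨e, ⟨he, hin e he v hv hvA⟩, hv⟩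
  have heven := even_ncard_covered _ hNm
  rw [hNA] at heven
  exact (Nat.not_even_iff_odd.mpr hodd) heven

lemma uncovered_mem_R {E F : Set (Sym2 V)} {Q R S : Set V} (hGE : IsGE E F Q R S)
    {a : V} (ha : ¬ covered F a) : a ∈ R := by
  obtain ⟨huniv, _, _, _, hQ, _, hS⟩ := hGE
  have haQ : a ∉ Q := by
    intro h
    obtain ⟨e, he, hv⟩ := hQ a h
    exact ha ⟨e, he.1, hv⟩
  have haS : a ∉ S := by
    intro h
    obtain ⟨t, ht, _⟩ := hS a h
    exact ha ⟨_, ht, Sym2.mem_mk_left _ _⟩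
  have : a ∈ Q ∪ R ∪ S := huniv ▸ Set.mem_univ a
  rcases this with (h | h) | h
  · exact absurd h haQ
  · exact h
  · exact absurd h haS

lemma exposed_unique {E F : Set (Sym2 V)} {Q R S : Set V} (hGE : IsGE E F Q R S)
    {r u : V} (hrR : r ∈ R) (hrx : ¬ covered (edgesIn F (comp (avoid E S) r)) r)
    (hu : u ∈ comp (avoid E S) r)
    (hux : ¬ covered (edgesIn F (comp (avoid E S) u)) u) : u = r := by
  obtain ⟨-, -, -, -, -, hR, -⟩ := hGE
  obtain ⟨w, hwP, hwu⟩ := (hR r hrR).2.2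
  have hcomp : comp (avoid E S) u = comp (avoid E S) r := comp_eq_of_mem hu
  have h1 : u = w := hwu u ⟨hu, by rwa [hcomp] at hux⟩
  have h2 : r = w := hwu r ⟨mem_comp_self _ _, hrx⟩
  rw [h1, h2]

/-- Even-position path edges. -/
def PEdges (q : ℕ → V) (n : ℕ) : Set (Sym2 V) :=
  (fun k => s(q (2 * k), q (2 * k + 1))) '' {k | 2 * k + 1 < n}

/-- Odd-position path edges. -/
def OEdges (q : ℕ → V) (n : ℕ) : Set (Sym2 V) :=
  (fun k => s(q (2 * k + 1), q (2 * k + 2))) '' {k | 2 * k + 2 < n}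

lemma OEdges_subset_F {E F : Set (Sym2 V)} {q : ℕ → V} {n : ℕ}
    (halt : ∀ i, i + 1 < n → s(q i, q (i + 1)) ∈ (if i % 2 = 0 then E \ F else F)) :
    OEdges q n ⊆ F := by
  rintro e ⟨k, hk, rfl⟩
  have h1 := halt (2 * k + 1) hk
  rwa [if_neg (by omega)] at h1

lemma PEdges_subset_EF {E F : Set (Sym2 V)} {q : ℕ → V} {n : ℕ}
    (halt : ∀ i, i + 1 < n → s(q i, q (i + 1)) ∈ (if i % 2 = 0 then E \ F else F)) :
    PEdges q n ⊆ E \ F := by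
  rintro e ⟨k, hk, rfl⟩
  have h1 := halt (2 * k) hk
  rwa [if_pos (by omega)] at h1

lemma F_edge_interior {E F : Set (Sym2 V)} (hFm : IsMatching F) {q : ℕ → V} {n : ℕ}
    (halt : ∀ i, i + 1 < n → s(q i, q (i + 1)) ∈ (if i % 2 = 0 then E \ F else F)) :
    ∀ k, 1 ≤ k → k + 1 < n → ∀ f ∈ F, q k ∈ f → f ∈ OEdges q n := by
  intro k hk1 hkn f hfF hqkf
  rcases Nat.even_or_odd k with hke | hko
  · obtain ⟨t, rfl⟩ := hke
    have ht1 : 1 ≤ t := by omega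
    have hedge := halt (t + t - 1) (by omega)
    rw [if_neg (by omega)] at hedge
    have he1 : t + t - 1 + 1 = t + t := by omega
    rw [he1] at hedge
    have hfe : f = s(q (t + t - 1), q (t + t)) :=
      matching_eq hFm hfF hedge hqkf (Sym2.mem_mk_right _ _)
    refine ⟨t - 1, show 2 * (t - 1) + 2 < n by omega, ?_⟩
    have e1 : 2 * (t - 1) + 1 = t + t - 1 := by omega
    have e2 : 2 * (t - 1) + 2 = t + t := by omega
    show s(q (2 * (t - 1) + 1), q (2 * (t - 1) + 2)) = f
    rw [e1, e2, hfe]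
  · obtain ⟨t, rfl⟩ := hko
    have hedge := halt (2 * t + 1) hkn
    rw [if_neg (by omega)] at hedge
    have hfe : f = s(q (2 * t + 1), q (2 * t + 2)) :=
      matching_eq hFm hfF hedge hqkf (Sym2.mem_mk_left _ _)
    exact ⟨t, hkn, hfe.symm⟩

lemma toggle {E F : Set (Sym2 V)} (hFsub : F ⊆ E) (hFm : IsMatching F)
    (q : ℕ → V) (n : ℕ) (hn : 2 ≤ n) (heven : Even n)
    (hinj : ∀ i < n, ∀ j < n, q i = q j → i = j)
    (halt : ∀ i, i + 1 < n → s(q i, q (i + 1)) ∈ (if i % 2 = 0 then E \ F else F))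
    (ha : ¬ covered F (q 0))
    (W : Set (Sym2 V)) (hWF : W ⊆ F)
    (hWlast : ∀ f ∈ F, q (n - 1) ∈ f → f ∈ W) :
    IsMatching ((F \ (OEdges q n ∪ W)) ∪ PEdges q n) ∧
      ((F \ (OEdges q n ∪ W)) ∪ PEdges q n) ⊆ E := by
  obtain ⟨m, hm⟩ := heven
  have hmix : ∀ e ∈ F \ (OEdges q n ∪ W), ∀ k, 2 * k + 1 < n →
      ∀ v, v ∈ e → v ∈ s(q (2 * k), q (2 * k + 1)) → False := by
    rintro e ⟨heF, heD⟩ k hk v hve hvf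
    rcases Sym2.mem_iff.mp hvf with rfl | rfl
    · by_cases h0 : k = 0
      · subst h0
        exact ha ⟨e, heF, by simpa using hve⟩
      · exact heD (Or.inl (F_edge_interior hFm halt (2 * k) (by omega) (by omega) e heF hve))
    · by_cases hlast : 2 * k + 1 = n - 1
      · exact heD (Or.inr (hWlast e heF (by rwa [hlast] at hve)))
      · exact heD (Or.inl (F_edge_interior hFm halt (2 * k + 1) (by omega) (by omega) e heF hve))
  constructor
  · constructor
    · rintro e (⟨heF, -⟩ | ⟨k, hk, rfl⟩)
      · exact hFm.1 e heF
      · intro hd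
        replace hk : 2 * k + 1 < n := hk
        rw [Sym2.mk_isDiag_iff] at hd
        have := hinj _ (by omega) _ (by omega) hd
        omega
    · rintro e (he | he) f (hf | hf) hne v hv hvf
      · exact hFm.2 e he.1 f hf.1 hne v hv hvf
      · obtain ⟨k, hk, rfl⟩ := hf
        exact hmix e he k hk v hv hvf
      · obtain ⟨k, hk, rfl⟩ := he
        exact hmix f hf k hk v hvf hv
      · obtain ⟨k, hk, rfl⟩ := he
        obtain ⟨k', hk', rfl⟩ := hf
        replace hk : 2 * k + 1 < n := hk
        replace hk' : 2 * k' + 1 < n := hk'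
        have hkk : k ≠ k' := by
          rintro rfl; exact hne rfl
        rcases Sym2.mem_iff.mp hv with h1 | h1 <;> rcases Sym2.mem_iff.mp hvf with h2 | h2 <;>
        · have := hinj _ (by omega) _ (by omega) (h1.symm.trans h2)
          omega
  · rintro e (⟨heF, -⟩ | he)
    · exact hFsub heF
    · exact (PEdges_subset_EF halt he).1

lemma core {V : Type*} [Fintype V] (E F : Set (Sym2 V)) (Q R S : Set V)
    (hF : IsMaxMatching E F) (hGE : IsGE E F Q R S)
    (q : ℕ → V) (n : ℕ) (hn : 2 ≤ n) (heven : Even n)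
    (hinj : ∀ i < n, ∀ j < n, q i = q j → i = j)
    (halt : ∀ i, i + 1 < n → s(q i, q (i + 1)) ∈ (if i % 2 = 0 then E \ F else F))
    (ha : ¬ covered F (q 0))
    (hxR : q (n - 1) ∈ R)
    (hxexp : ¬ covered (edgesIn F (comp (avoid E S) (q (n - 1)))) (q (n - 1))) : False := by
  obtain ⟨hFsub, hFm, hFmax⟩ := hF
  have hRS : Disjoint R S := hGE.2.2.2.1
  have hRpart := hGE.2.2.2.2.2.1
  have hSpart := hGE.2.2.2.2.2.2
  by_cases hxcov : covered F (q (n - 1))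
  case neg =>
    -- case (a) : augmenting path, contradiction with maximality
    have hWlast : ∀ f ∈ F, q (n - 1) ∈ f → f ∈ (∅ : Set (Sym2 V)) := by
      intro f hf hv
      exact absurd ⟨f, hf, hv⟩ hxcov
    obtain ⟨hM, hMsub⟩ := toggle hFsub hFm q n hn heven hinj halt ha ∅ (Set.empty_subset _) hWlast
    rw [Set.union_empty] at hM hMsub
    have hle := hFmax _ hMsub hM
    obtain ⟨m, hm⟩ := heven
    have hOEsub : OEdges q n ⊆ F := OEdges_subset_F halt
    have hPEdisj : Disjoint (F \ OEdges q n) (PEdges q n) := by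
      rw [Set.disjoint_left]
      rintro e ⟨heF, -⟩ he
      exact (PEdges_subset_EF halt he).2 heF
    have hPEcard : (PEdges q n).ncard = m := by
      have hidxP : {k : ℕ | 2 * k + 1 < n} = Set.Iio m := by
        ext k
        show 2 * k + 1 < n ↔ k < m
        omega
      have hPeq : PEdges q n = (fun k => s(q (2 * k), q (2 * k + 1))) '' Set.Iio m := by
        unfold PEdges
        rw [hidxP]
      rw [hPeq, Set.ncard_image_of_injOn, ← Finset.coe_Iio, Set.ncard_coe_finset, Nat.card_Iio]
      intro k hk k' hk' hkk
      simp only [Set.mem_Iio] at hk hk'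
      rcases Sym2.eq_iff.mp hkk with ⟨h1, -⟩ | ⟨h1, h2⟩
      · have := hinj _ (by omega) _ (by omega) h1
        omega
      · have := hinj _ (by omega) _ (by omega) h1
        omega
    have hOEcard : (OEdges q n).ncard = m - 1 := by
      have hidxO : {k : ℕ | 2 * k + 2 < n} = Set.Iio (m - 1) := by
        ext k
        show 2 * k + 2 < n ↔ k < m - 1
        omega
      have hOeq : OEdges q n = (fun k => s(q (2 * k + 1), q (2 * k + 2))) '' Set.Iio (m - 1) := by
        unfold OEdges
        rw [hidxO]
      rw [hOeq, Set.ncard_image_of_injOn, ← Finset.coe_Iio, Set.ncard_coe_finset, Nat.card_Iio]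
      intro k hk k' hk' hkk
      simp only [Set.mem_Iio] at hk hk'
      rcases Sym2.eq_iff.mp hkk with ⟨h1, -⟩ | ⟨h1, h2⟩
      · have := hinj _ (by omega) _ (by omega) h1
        omega
      · have := hinj _ (by omega) _ (by omega) h1
        omega
    have h1 : ((F \ OEdges q n) ∪ PEdges q n).ncard
        = (F \ OEdges q n).ncard + (PEdges q n).ncard :=
      Set.ncard_union_eq hPEdisj (Set.toFinite _) (Set.toFinite _)
    have h2 : (F \ OEdges q n).ncard = F.ncard - (OEdges q n).ncard :=
      Set.ncard_diff hOEsub (Set.toFinite _)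
    have h3 : (OEdges q n).ncard ≤ F.ncard := Set.ncard_le_ncard hOEsub (Set.toFinite _)
    omega
  case pos =>
    -- case (b)
    obtain ⟨f0, hf0F, hxf0⟩ := hxcov
    obtain ⟨s0, rfl⟩ := Sym2.mem_iff_exists.mp hxf0
    have hxs0 : q (n - 1) ≠ s0 := fun h => hFm.1 _ hf0F (Sym2.mk_isDiag_iff.mpr h)
    have hxnS : q (n - 1) ∉ S := Set.disjoint_left.mp hRS hxR
    have hs0S : s0 ∈ S := by
      by_contra hs0
      have hav : s(q (n - 1), s0) ∈ avoid E S := by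
        refine ⟨hFsub hf0F, ?_⟩
        intro u hu
        rcases Sym2.mem_iff.mp hu with rfl | rfl
        exacts [hxnS, hs0]
      refine hxexp ⟨s(q (n - 1), s0), ⟨hf0F, ?_⟩, Sym2.mem_mk_left _ _⟩
      intro u hu
      rcases Sym2.mem_iff.mp hu with rfl | rfl
      exacts [mem_comp_self _ _, mem_comp_of_edge hav]
    have hWlast : ∀ f ∈ F, q (n - 1) ∈ f → f ∈ ({s(q (n - 1), s0)} : Set (Sym2 V)) := by
      intro f hf hv
      exact Set.mem_singleton_iff.mpr (matching_eq hFm hf hf0F hv (Sym2.mem_mk_left _ _))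
    obtain ⟨hM, hMsub⟩ := toggle hFsub hFm q n hn heven hinj halt ha _
      (Set.singleton_subset_iff.mpr hf0F) hWlast
    set M : Set (Sym2 V) := (F \ (OEdges q n ∪ {s(q (n - 1), s0)})) ∪ PEdges q n with hMdef
    -- every path vertex is covered by M
    have hc1 : ∀ k, k < n → covered M (q k) := by
      intro k hk
      obtain ⟨m, hm⟩ := heven
      have h1 : 2 * (k / 2) + 1 < n := by omega
      have h2 : k = 2 * (k / 2) ∨ k = 2 * (k / 2) + 1 := by omega
      refine ⟨s(q (2 * (k / 2)), q (2 * (k / 2) + 1)), Or.inr ⟨k / 2, h1, rfl⟩, ?_⟩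
      rcases h2 with h | h
      · exact Sym2.mem_iff.mpr (Or.inl (congrArg q h))
      · exact Sym2.mem_iff.mpr (Or.inr (congrArg q h))
    -- s0 is not a path vertex
    have hs0path : ∀ k, k < n → q k ≠ s0 := by
      intro k hk hkeq
      obtain ⟨m, hm⟩ := heven
      by_cases h0 : k = 0
      · subst h0
        exact ha ⟨s(q (n - 1), s0), hf0F, hkeq ▸ Sym2.mem_mk_right _ _⟩
      by_cases hl : k = n - 1
      · exact hxs0 (hl ▸ hkeq)
      have hOE := F_edge_interior hFm halt k (by omega) (by omega) _ hf0F
        (hkeq ▸ Sym2.mem_mk_right _ _)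
      obtain ⟨t, ht, heq⟩ := hOE
      replace ht : 2 * t + 2 < n := ht
      have heq' : s(q (n - 1), s0) = s(q (2 * t + 1), q (2 * t + 2)) := heq.symm
      rcases Sym2.eq_iff.mp heq' with ⟨h1, -⟩ | ⟨h1, -⟩
      · have := hinj _ (by omega) _ (by omega) h1
        omega
      · have := hinj _ (by omega) _ (by omega) h1
        omega
    -- s0 is uncovered by M
    have hs0unc : ¬ covered M s0 := by
      rintro ⟨e, he, hs0e⟩
      rcases he with ⟨heF, heD⟩ | ⟨k, hk, rfl⟩
      · exact heD (Or.inr (Set.mem_singleton_iff.mpr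
          (matching_eq hFm heF hf0F hs0e (Sym2.mem_mk_right _ _))))
      · replace hk : 2 * k + 1 < n := hk
        rcases Sym2.mem_iff.mp hs0e with h | h
        · exact hs0path _ (by omega) h.symm
        · exact hs0path _ hk h.symm
    have hcompR : ∀ v ∈ R, comp (avoid E S) v ⊆ R := fun v hv => (hRpart v hv).1
    have hhypo : ∀ v ∈ R, Hypomatchable E (comp (avoid E S) v) := fun v hv => (hRpart v hv).2.1
    -- key uncoveredness transfer
    have hkeyunc : ∀ u ∈ R, ¬ covered M u → ¬ covered F u ∧ u ≠ q 0 := by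
      intro u huR hu
      constructor
      · rintro ⟨f, hfF, huf⟩
        by_cases hfD : f ∈ OEdges q n ∪ {s(q (n - 1), s0)}
        · rcases hfD with ⟨t, ht, rfl⟩ | hfW
          · replace ht : 2 * t + 2 < n := ht
            rcases Sym2.mem_iff.mp huf with h | h
            · exact hu (h ▸ hc1 (2 * t + 1) (by omega))
            · exact hu (h ▸ hc1 (2 * t + 2) ht)
          · rw [Set.mem_singleton_iff] at hfW
            subst hfW
            rcases Sym2.mem_iff.mp huf with rfl | rfl
            · exact hu (hc1 (n - 1) (by omega))
            · exact Set.disjoint_left.mp hRS huR hs0S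
        · exact hu ⟨f, Or.inl ⟨hfF, hfD⟩, huf⟩
      · rintro rfl
        exact hu (hc1 0 (by omega))
    set X : Set V := {v | v ∈ R ∧ ¬ covered (edgesIn F (comp (avoid E S) v)) v} with hXdef
    set Y : Set V := {r ∈ X | ∃ u ∈ comp (avoid E S) r, ¬ covered M u} with hYdef
    have hYX : Y ⊆ X := fun r hr => hr.1
    have hY : ∀ r ∈ Y, ¬ covered F r ∧ r ≠ q 0 := by
      rintro r ⟨hrX, u, hu, huM⟩
      have huR : u ∈ R := hcompR r hrX.1 hu
      obtain ⟨huF, hua⟩ := hkeyunc u huR huM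
      have huX : u ∈ X := ⟨huR, fun ⟨e, he, hue⟩ => huF ⟨e, he.1, hue⟩⟩
      have hur : u = r := exposed_unique hGE hrX.1 hrX.2 hu huX.2
      rw [← hur]
      exact ⟨huF, hua⟩
    have haR : q 0 ∈ R := uncovered_mem_R hGE ha
    have haX : q 0 ∈ X := ⟨haR, fun ⟨e, he, h⟩ => ha ⟨e, he.1, h⟩⟩
    have haY : q 0 ∉ Y := fun h => (hY _ h).2 rfl
    -- the F-covered elements of X are matched into S, injectively, and S saturates them
    have hSX : ∀ s' ∈ S, ∃ t, (t ∈ X ∧ covered F t) ∧ s(s', t) ∈ F := by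
      intro s' hs'
      obtain ⟨t, htF, htR, htexp⟩ := hSpart s' hs'
      exact ⟨t, ⟨⟨htR, htexp⟩, ⟨s(s', t), htF, Sym2.mem_mk_right _ _⟩⟩, htF⟩
    choose! ψ hψX hψF using hSX
    have hScard : S.ncard ≤ {v ∈ X | covered F v}.ncard := by
      refine Set.ncard_le_ncard_of_injOn ψ (fun s' hs' => hψX s' hs') ?_ (Set.toFinite _)
      intro s1 h1 s2 h2 heq
      have he1 := hψF s1 h1
      have he2 := hψF s2 h2
      rw [heq] at he1
      have := matching_eq hFm he1 he2 (Sym2.mem_mk_right _ _) (Sym2.mem_mk_right _ _)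
      rcases Sym2.eq_iff.mp this with ⟨h3, -⟩ | ⟨h3, h4⟩
      · exact h3
      · exact absurd ((hψX s2 h2).1.1) (Set.disjoint_left.mp hRS.symm (h3 ▸ h1))
    -- X contains the disjoint union of {covered part}, Y, {q 0}
    have hXcY : Disjoint {v ∈ X | covered F v} Y := by
      rw [Set.disjoint_left]
      rintro v ⟨-, hvc⟩ hvY
      exact (hY v hvY).1 hvc
    have haXc : q 0 ∉ {v ∈ X | covered F v} := fun h => ha h.2
    have hsub : ({v ∈ X | covered F v} ∪ Y) ∪ {q 0} ⊆ X := by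
      rintro v ((⟨h, -⟩ | h) | h)
      · exact h
      · exact hYX h
      · rw [Set.mem_singleton_iff] at h
        rw [h]
        exact haX
    have hcard1 : {v ∈ X | covered F v}.ncard + Y.ncard + 1 ≤ X.ncard := by
      have hd2 : Disjoint ({v ∈ X | covered F v} ∪ Y) ({q 0} : Set V) := by
        rw [Set.disjoint_right]
        rintro v hv
        rw [Set.mem_singleton_iff] at hv
        subst hv
        rintro (h | h)
        exacts [haXc h, haY h]
      have e1 : (({v ∈ X | covered F v} ∪ Y) ∪ {q 0}).ncard
          = {v ∈ X | covered F v}.ncard + Y.ncard + 1 := by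
        rw [Set.ncard_union_eq hd2 (Set.toFinite _) (Set.toFinite _),
          Set.ncard_union_eq hXcY (Set.toFinite _) (Set.toFinite _), Set.ncard_singleton]
      rw [← e1]
      exact Set.ncard_le_ncard hsub (Set.toFinite _)
    -- Berge part : each component of X \ Y sends an M-edge to S \ {s0}
    have hBerge : ∀ r ∈ X \ Y, ∃ z, (z ∈ S ∧ z ≠ s0) ∧
        ∃ u, u ∈ comp (avoid E S) r ∧ s(u, z) ∈ M := by
      rintro r ⟨hrX, hrY⟩
      have hrR : r ∈ R := hrX.1
      have hallcov : ∀ u ∈ comp (avoid E S) r, covered M u := by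
        by_contra hcon
        push_neg at hcon
        obtain ⟨u, hu1, hu2⟩ := hcon
        exact hrY ⟨hrX, u, hu1, hu2⟩
      have hodd : Odd (comp (avoid E S) r).ncard :=
        odd_ncard_of_hypo (hhypo r hrR) (mem_comp_self _ _)
      obtain ⟨u, huA, z, hzA, hedge⟩ := exists_leaving hM hodd hallcov
      have hzS : z ∈ S := by
        by_contra hzS
        have huR : u ∈ R := hcompR r hrR huA
        have hav : s(u, z) ∈ avoid E S := by
          refine ⟨hMsub hedge, ?_⟩
          intro w hw
          rcases Sym2.mem_iff.mp hw with rfl | rfl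
          exacts [Set.disjoint_left.mp hRS huR, hzS]
        have : z ∈ comp (avoid E S) u := mem_comp_of_edge hav
        rw [comp_eq_of_mem huA] at this
        exact hzA this
      have hzs0 : z ≠ s0 := by
        rintro rfl
        exact hs0unc ⟨s(u, z), hedge, Sym2.mem_mk_right _ _⟩
      exact ⟨z, ⟨hzS, hzs0⟩, u, huA, hedge⟩
    choose! zb hzb ub hub hubM using hBerge
    have hBcard : (X \ Y).ncard ≤ (S \ {s0}).ncard := by
      refine Set.ncard_le_ncard_of_injOn zb
        (fun r hr => ⟨(hzb r hr).1, (hzb r hr).2⟩) ?_ (Set.toFinite _)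
      intro r1 h1 r2 h2 heq
      have he1 := hubM r1 h1
      have he2 := hubM r2 h2
      rw [heq] at he1
      have := matching_eq hM he1 he2 (Sym2.mem_mk_right _ _) (Sym2.mem_mk_right _ _)
      have hu12 : ub r1 = ub r2 := by
        rcases Sym2.eq_iff.mp this with ⟨h3, -⟩ | ⟨h3, h4⟩
        · exact h3
        · exfalso
          have : ub r1 ∈ R := hcompR r1 h1.1.1 (hub r1 h1)
          exact Set.disjoint_left.mp hRS this (h3 ▸ (hzb r2 h2).1)
      have hcc : comp (avoid E S) r1 = comp (avoid E S) r2 := by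
        rw [← comp_eq_of_mem (hub r1 h1), hu12, comp_eq_of_mem (hub r2 h2)]
      have hr21 : r2 ∈ comp (avoid E S) r1 := hcc ▸ mem_comp_self _ _
      exact (exposed_unique hGE h1.1.1 h1.1.2 hr21 h2.1.2).symm
    have hXYcard : (X \ Y).ncard = X.ncard - Y.ncard := Set.ncard_diff hYX (Set.toFinite _)
    have hYle : Y.ncard ≤ X.ncard := Set.ncard_le_ncard hYX (Set.toFinite _)
    have hSs0 : (S \ {s0}).ncard = S.ncard - 1 :=
      Set.ncard_diff_singleton_of_mem hs0S
    have hS1 : 0 < S.ncard := (Set.ncard_pos (Set.toFinite _)).mpr ⟨s0, hs0S⟩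
    omega

lemma main_key {V : Type*} [Fintype V] (E F : Set (Sym2 V)) (Q R S : Set V)
    (hF : IsMaxMatching E F) (hGE : IsGE E F Q R S) :
    ∀ (N : ℕ) (p : List V), p.length ≤ N → AltPath (E \ F) F p → ∀ (hne : p ≠ []),
      ¬ covered F (p.head hne) → Even p.length →
      p.getLast hne ∈ S ∪ {v ∈ R | covered (edgesIn F (comp (avoid E S) v)) v} := by
  have hFm := hF.2.1
  have hRS : Disjoint R S := hGE.2.2.2.1
  have hRpart := hGE.2.2.2.2.2.1
  have hSpart := hGE.2.2.2.2.2.2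
  intro N
  induction N with
  | zero =>
    intro p hlen halt hne _ _
    exact absurd (List.length_eq_zero_iff.mp (Nat.le_zero.mp hlen)) hne
  | succ N IH =>
    intro p hlen halt hne hhead heven
    obtain ⟨-, hnodup, hidx⟩ := halt
    set n := p.length with hndef
    have hn2 : 2 ≤ n := by
      obtain ⟨m, hm⟩ := heven
      have h0 : n ≠ 0 := fun h => hne (List.length_eq_zero_iff.mp h)
      omega
    set q : ℕ → V := fun i => p.getD i (p.head hne) with hqdef
    have hq : ∀ i (h : i < n), q i = p[i] := by
      intro i h
      simp [hqdef, List.getD_eq_getElem?_getD, List.getElem?_eq_getElem h]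
    have hinj : ∀ i < n, ∀ j < n, q i = q j → i = j := by
      intro i hi j hj hqij
      rw [hq i hi, hq j hj] at hqij
      exact hnodup.getElem_inj_iff.mp hqij
    have halt' : ∀ i, i + 1 < n → s(q i, q (i + 1)) ∈ (if i % 2 = 0 then E \ F else F) := by
      intro i hi
      rw [hq i (by omega), hq (i + 1) hi]
      exact hidx i hi
    have hhead' : q 0 = p.head hne := by
      rw [hq 0 (by omega), List.head_eq_getElem]
    have hlast' : q (n - 1) = p.getLast hne := by
      rw [hq (n - 1) (by omega), List.getLast_eq_getElem]
    have ha : ¬ covered F (q 0) := by rwa [hhead']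
    rw [← hlast']
    by_cases hxS : q (n - 1) ∈ S
    · exact Or.inl hxS
    have hprevR : q (n - 2) ∈ R := by
      rcases eq_or_lt_of_le hn2 with h2 | h4
      · have hz : n - 2 = 0 := by omega
        rw [hz]
        exact uncovered_mem_R hGE ha
      · have hn4 : 4 ≤ n := by
          obtain ⟨m, hm⟩ := heven
          omega
        have hlp' : (p.take (n - 2)).length = n - 2 := by
          rw [List.length_take]
          omega
        have hne' : p.take (n - 2) ≠ [] := by
          intro h
          rw [h] at hlp'
          simp at hlp'
          omega
        have hq' : ∀ i (h : i < (p.take (n - 2)).length), (p.take (n - 2))[i] = q i := by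
          intro i h
          simp only [List.getElem_take]
          exact (hq i (by omega)).symm
        have halt'' : AltPath (E \ F) F (p.take (n - 2)) := by
          refine ⟨hne', List.Nodup.sublist (List.take_sublist _ _) hnodup, ?_⟩
          intro i hi1
          rw [hq' i (by omega), hq' (i + 1) hi1]
          exact halt' i (by omega)
        have hhead'' : (p.take (n - 2)).head hne' = p.head hne := by
          rw [List.head_eq_getElem, hq' 0 (by omega), hhead']
        have hlast'' : (p.take (n - 2)).getLast hne' = q (n - 3) := by
          rw [List.getLast_eq_getElem, hq' _ (by omega)]
          exact congrArg q (by omega)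
        have heven' : Even (p.take (n - 2)).length := by
          rw [hlp']
          obtain ⟨m, hm⟩ := heven
          exact ⟨m - 1, by omega⟩
        have hprevT := IH (p.take (n - 2)) (by omega) halt'' hne' (by rwa [hhead'']) heven'
        rw [hlast''] at hprevT
        have hedge : s(q (n - 3), q (n - 2)) ∈ F := by
          have h1 := halt' (n - 3) (by omega)
          rw [if_neg (by obtain ⟨m, hm⟩ := heven; omega)] at h1
          have he : n - 3 + 1 = n - 2 := by omega
          rwa [he] at h1
        rcases hprevT with hS3 | ⟨hR3, hcov3⟩
        · obtain ⟨t, htF, htR, -⟩ := hSpart (q (n - 3)) hS3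
          have heq := matching_eq hFm htF hedge (Sym2.mem_mk_left _ _) (Sym2.mem_mk_left _ _)
          rcases Sym2.eq_iff.mp heq with ⟨-, rfl⟩ | ⟨h1, h2⟩
          · exact htR
          · exact absurd (hinj _ (by omega) _ (by omega) h1) (by omega)
        · obtain ⟨f, ⟨hfF, hfin⟩, hvf⟩ := hcov3
          have hfe := matching_eq hFm hfF hedge hvf (Sym2.mem_mk_left _ _)
          rw [hfe] at hfin
          exact (hRpart (q (n - 3)) hR3).1 (hfin _ (Sym2.mem_mk_right _ _))
    have hxedge : s(q (n - 2), q (n - 1)) ∈ E \ F := by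
      have h1 := halt' (n - 2) (by omega)
      rw [if_pos (by obtain ⟨m, hm⟩ := heven; omega)] at h1
      have he : n - 2 + 1 = n - 1 := by omega
      rwa [he] at h1
    have hxR : q (n - 1) ∈ R := by
      have hav : s(q (n - 2), q (n - 1)) ∈ avoid E S := by
        refine ⟨hxedge.1, ?_⟩
        intro u hu
        rcases Sym2.mem_iff.mp hu with rfl | rfl
        exacts [Set.disjoint_left.mp hRS hprevR, hxS]
      exact (hRpart _ hprevR).1 (mem_comp_of_edge hav)
    by_cases hxcov : covered (edgesIn F (comp (avoid E S) (q (n - 1)))) (q (n - 1))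
    · exact Or.inr ⟨hxR, hxcov⟩
    · exact (core E F Q R S hF hGE q n hn2 heven hinj halt' ha hxR hxcov).elim

end Aux

/-- given a Gallai–Edmonds decomposition `(Q,R,S)` for a maximum matching `F`
and `K = E \ F`, every oddly `K`-reachable vertex lies in `S ∪ ⋃ (V(H_i) \ {r_i})`, i.e. in
`S` together with the vertices of `R` covered by `F` within their own component. -/
theorem stmt_12 {V : Type*} [Fintype V] (E F : Set (Sym2 V)) (Q R S : Set V)
    (hE : ∀ e ∈ E, ¬ e.IsDiag) (hF : IsMaxMatching E F) (hGE : IsGE E F Q R S) :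
    ORset (E \ F) F ⊆ S ∪ {v ∈ R | covered (edgesIn F (comp (avoid E S) v)) v} := by
  rintro x ⟨a, haunc, p, hp, halt, hhead, hlast, heven⟩
  have h := main_key E F Q R S hF hGE p.length p le_rfl halt hp (by rwa [hhead]) heven
  rwa [hlast] at h
end
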